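/- arXiv:math/0702467 — 6 statements merged into one kernel-verified Lean document; each statement's English description precedes it below -/
import Mathlib

section
/- Let N be a p×p matrix (p ≥ 2) whose top-left (m+1)×(m+1) block (for some m ≤ p−2) is tridiagonal with diagonal entries 2 in rows 0..m−1 and sub/super-diagonal entries −1 connecting rows 0..m, and whose rows/columns with index < m have no other nonzero entries. Then det N = (m+1)·det N_{{m,...,p−1}} − m·det N_{{m+1,...,p−1}}, where N_J denotes the principal submatrix with rows and columns indexed by J. -/
set_option maxHeartbeats 1000000

lemma det_submatrix_congr {p s t : ℕ} (N : Matrix (Fin p) (Fin p) ℤ) (h : s = t)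
    (f : Fin s → Fin p) (g : Fin t → Fin p)
    (hfg : ∀ k : Fin s, (f k : ℕ) = (g (Fin.cast h k) : ℕ)) :
    (N.submatrix f f).det = (N.submatrix g g).det := by
  subst h
  have hf : f = g := funext fun k => Fin.ext (by simpa using hfg k)
  rw [hf]

lemma expand_block (n : ℕ) (M : Matrix (Fin (n+2)) (Fin (n+2)) ℤ)
    (h00 : M 0 0 = 2) (h01 : M 0 1 = -1) (h10 : M 1 0 = -1)
    (hrow : ∀ j : Fin (n+2), 2 ≤ (j:ℕ) → M 0 j = 0)
    (hcol : ∀ i : Fin (n+2), 2 ≤ (i:ℕ) → M i 0 = 0) :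
    M.det = 2 * (M.submatrix Fin.succ Fin.succ).det
      - (M.submatrix (fun k : Fin n => k.succ.succ) (fun k : Fin n => k.succ.succ)).det := by
  have hA : (M.submatrix Fin.succ ((1 : Fin (n+2)).succAbove)).det
      = - (M.submatrix (fun k : Fin n => k.succ.succ) (fun k : Fin n => k.succ.succ)).det := by
    rw [Matrix.det_succ_column_zero, Fin.sum_univ_succ]
    have hz : ∀ i : Fin n,
        (M.submatrix Fin.succ ((1 : Fin (n+2)).succAbove)) i.succ 0 = 0 := by
      intro i
      have : M i.succ.succ 0 = 0 := hcol _ (by simp)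
      simpa [Matrix.submatrix_apply, Fin.succAbove_of_castSucc_lt] using this
    rw [Finset.sum_eq_zero (fun i _ => by rw [hz i]; ring)]
    have h0 : (M.submatrix Fin.succ ((1 : Fin (n+2)).succAbove)) 0 0 = -1 := by
      have : ((1 : Fin (n+2)).succAbove 0) = 0 := Fin.succAbove_of_castSucc_lt _ _ (by simp)
      simp [Matrix.submatrix_apply, this, h10]
    have hsub : ((M.submatrix Fin.succ ((1 : Fin (n+2)).succAbove)).submatrix
        (Fin.succAbove 0) Fin.succ)
        = M.submatrix (fun k : Fin n => k.succ.succ) (fun k : Fin n => k.succ.succ) := by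
      ext i j
      have : ((1 : Fin (n+2)).succAbove j.succ) = j.succ.succ :=
        Fin.succAbove_of_le_castSucc _ _ (by simp [Fin.le_def])
      simp [Matrix.submatrix_apply, Fin.succAbove_zero, this]
    rw [h0, hsub]
    simp
  rw [Matrix.det_succ_row_zero, Fin.sum_univ_succ, Fin.sum_univ_succ]
  rw [Finset.sum_eq_zero (fun j _ => by rw [hrow j.succ.succ (by simp)]; ring)]
  have h1 : Fin.succ (0 : Fin (n+1)) = 1 := rfl
  rw [Fin.succAbove_zero, h00, h1, h01, hA]
  simp
  ring

/-- Embedding of `Fin (n+2)` into `Fin p` with offset `m`. -/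
def emb2 (p m n : ℕ) (h : m + (n + 2) ≤ p) (k : Fin (n + 2)) : Fin p :=
  ⟨m + k.1, by have := k.2; omega⟩

lemma emb2_val (p m n : ℕ) (h : m + (n + 2) ≤ p) (k : Fin (n + 2)) :
    (emb2 p m n h k : ℕ) = m + (k : ℕ) := rfl

lemma expand_block' (p m n : ℕ) (h : m + (n + 2) ≤ p) (N : Matrix (Fin p) (Fin p) ℤ)
    (h00 : (N.submatrix (emb2 p m n h) (emb2 p m n h)) 0 0 = 2)
    (h01 : (N.submatrix (emb2 p m n h) (emb2 p m n h)) 0 1 = -1)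
    (h10 : (N.submatrix (emb2 p m n h) (emb2 p m n h)) 1 0 = -1)
    (hrow : ∀ j : Fin (n+2), 2 ≤ (j:ℕ) → (N.submatrix (emb2 p m n h) (emb2 p m n h)) 0 j = 0)
    (hcol : ∀ i : Fin (n+2), 2 ≤ (i:ℕ) → (N.submatrix (emb2 p m n h) (emb2 p m n h)) i 0 = 0) :
    (N.submatrix (emb2 p m n h) (emb2 p m n h)).det
      = 2 * (N.submatrix (fun k : Fin (n+1) => emb2 p m n h k.succ)
            (fun k : Fin (n+1) => emb2 p m n h k.succ)).det
      - (N.submatrix (fun k : Fin n => emb2 p m n h k.succ.succ)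
            (fun k : Fin n => emb2 p m n h k.succ.succ)).det := by
  have := expand_block n (N.submatrix (emb2 p m n h) (emb2 p m n h)) h00 h01 h10 hrow hcol
  rw [Matrix.submatrix_submatrix, Matrix.submatrix_submatrix] at this
  exact this

lemma chain_aux (p : ℕ) (hp : 2 ≤ p) : ∀ (m : ℕ), m ≤ p - 2 →
    ∀ N : Matrix (Fin p) (Fin p) ℤ,
    (∀ i : Fin p, (i : ℕ) < m → N i i = 2) →
    (∀ i j : Fin p, (i : ℕ) < m → (j : ℕ) = (i : ℕ) + 1 →
      N i j = -1 ∧ N j i = -1) →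
    (∀ i j : Fin p, (i : ℕ) < m →
      ((j : ℕ) + 1 < (i : ℕ) ∨ (i : ℕ) + 1 < (j : ℕ)) →
      N i j = 0 ∧ N j i = 0) →
    N.det =
      (m + 1) * (N.submatrix
          (fun k : Fin (p - m) => (⟨m + (k : ℕ), Nat.lt_of_lt_of_le (Nat.add_lt_add_left k.2 m) (by have := k.2; omega)⟩ : Fin p))
          (fun k : Fin (p - m) => (⟨m + (k : ℕ), Nat.lt_of_lt_of_le (Nat.add_lt_add_left k.2 m) (by have := k.2; omega)⟩ : Fin p))).det
      - m * (N.submatrix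
          (fun k : Fin (p - m - 1) => (⟨m + 1 + (k : ℕ), Nat.lt_of_lt_of_le (Nat.add_lt_add_left k.2 (m + 1)) (by have := k.2; omega)⟩ : Fin p))
          (fun k : Fin (p - m - 1) => (⟨m + 1 + (k : ℕ), Nat.lt_of_lt_of_le (Nat.add_lt_add_left k.2 (m + 1)) (by have := k.2; omega)⟩ : Fin p))).det := by
  intro m
  induction m with
  | zero =>
    intro hm N hdiag hsub hzero
    have h0 : (N.submatrix
        (fun k : Fin (p - 0) => (⟨0 + (k : ℕ), by have := k.2; omega⟩ : Fin p))
        (fun k : Fin (p - 0) => (⟨0 + (k : ℕ), by have := k.2; omega⟩ : Fin p))).det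
        = (N.submatrix id id).det :=
      det_submatrix_congr N (by omega) _ id (fun k => by simp)
    rw [h0, Matrix.submatrix_id_id]
    push_cast
    ring
  | succ m IH =>
    intro hm N hdiag hsub hzero
    have IH' := IH (by omega) N (fun i hi => hdiag i (by omega))
      (fun i j hi hj => hsub i j (by omega) hj)
      (fun i j hi hij => hzero i j (by omega) hij)
    obtain ⟨n, hpm⟩ : ∃ n, p - m = n + 2 := ⟨p - m - 2, by omega⟩
    have hmn : m + (n + 2) ≤ p := by omega
    have h00 : (N.submatrix (emb2 p m n hmn) (emb2 p m n hmn)) 0 0 = 2 :=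
      hdiag _ (by rw [emb2_val]; simp)
    have h01 : (N.submatrix (emb2 p m n hmn) (emb2 p m n hmn)) 0 1 = -1 :=
      (hsub (emb2 p m n hmn 0) (emb2 p m n hmn 1) (by rw [emb2_val]; simp)
        (by rw [emb2_val, emb2_val]; simp)).1
    have h10 : (N.submatrix (emb2 p m n hmn) (emb2 p m n hmn)) 1 0 = -1 :=
      (hsub (emb2 p m n hmn 0) (emb2 p m n hmn 1) (by rw [emb2_val]; simp)
        (by rw [emb2_val, emb2_val]; simp)).2
    have hrow : ∀ j : Fin (n+2), 2 ≤ (j:ℕ) →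
        (N.submatrix (emb2 p m n hmn) (emb2 p m n hmn)) 0 j = 0 := fun j hj =>
      (hzero (emb2 p m n hmn 0) (emb2 p m n hmn j) (by rw [emb2_val]; simp)
        (Or.inr (by rw [emb2_val, emb2_val]; simp; omega))).1
    have hcol : ∀ i : Fin (n+2), 2 ≤ (i:ℕ) →
        (N.submatrix (emb2 p m n hmn) (emb2 p m n hmn)) i 0 = 0 := fun i hi =>
      (hzero (emb2 p m n hmn 0) (emb2 p m n hmn i) (by rw [emb2_val]; simp)
        (Or.inr (by rw [emb2_val, emb2_val]; simp; omega))).2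
    have hexp := expand_block' p m n hmn N h00 h01 h10 hrow hcol
    have hA : (N.submatrix
        (fun k : Fin (p - m) => (⟨m + (k : ℕ), by have := k.2; omega⟩ : Fin p))
        (fun k : Fin (p - m) => (⟨m + (k : ℕ), by have := k.2; omega⟩ : Fin p))).det
        = (N.submatrix (emb2 p m n hmn) (emb2 p m n hmn)).det :=
      det_submatrix_congr N hpm _ _ (fun k => by simp only [emb2, Fin.coe_cast])
    have hB : (N.submatrix
        (fun k : Fin (p - m - 1) => (⟨m + 1 + (k : ℕ), by have := k.2; omega⟩ : Fin p))
        (fun k : Fin (p - m - 1) => (⟨m + 1 + (k : ℕ), by have := k.2; omega⟩ : Fin p))).det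
        = (N.submatrix (fun k : Fin (n+1) => emb2 p m n hmn k.succ)
            (fun k : Fin (n+1) => emb2 p m n hmn k.succ)).det :=
      det_submatrix_congr N (by omega) _ _ (fun k => by simp only [emb2, Fin.val_succ, Fin.coe_cast]; omega)
    have hB' : (N.submatrix
        (fun k : Fin (p - (m+1)) => (⟨m + 1 + (k : ℕ), by have := k.2; omega⟩ : Fin p))
        (fun k : Fin (p - (m+1)) => (⟨m + 1 + (k : ℕ), by have := k.2; omega⟩ : Fin p))).det
        = (N.submatrix (fun k : Fin (n+1) => emb2 p m n hmn k.succ)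
            (fun k : Fin (n+1) => emb2 p m n hmn k.succ)).det :=
      det_submatrix_congr N (by omega) _ _ (fun k => by simp only [emb2, Fin.val_succ, Fin.coe_cast]; omega)
    have hC : (N.submatrix
        (fun k : Fin (p - (m+1) - 1) => (⟨m + 1 + 1 + (k : ℕ), by have := k.2; omega⟩ : Fin p))
        (fun k : Fin (p - (m+1) - 1) => (⟨m + 1 + 1 + (k : ℕ), by have := k.2; omega⟩ : Fin p))).det
        = (N.submatrix (fun k : Fin n => emb2 p m n hmn k.succ.succ)
            (fun k : Fin n => emb2 p m n hmn k.succ.succ)).det :=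
      det_submatrix_congr N (by omega) _ _ (fun k => by simp only [emb2, Fin.val_succ, Fin.coe_cast]; omega)
    rw [hA, hB] at IH'
    rw [hB', hC]
    push_cast at IH' ⊢
    linear_combination IH' + ((m : ℤ) + 1) * hexp

/-- Let `N` be a `p × p` integer matrix (`p ≥ 2`) whose rows with index
`< m` (for some `m ≤ p - 2`) form the top of a tridiagonal chain: diagonal entries `2`,
entries `-1` on the sub/super-diagonal down to row `m`, and zero elsewhere in those
rows and columns.  Then
`det N = (m+1)·det N_{{m,…,p-1}} - m·det N_{{m+1,…,p-1}}`,
where `N_J` denotes the principal submatrix on the index set `J`. -/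
theorem det_chain_development
    (p m : ℕ) (hp : 2 ≤ p) (hm : m ≤ p - 2)
    (N : Matrix (Fin p) (Fin p) ℤ)
    (hdiag : ∀ i : Fin p, (i : ℕ) < m → N i i = 2)
    (hsub : ∀ i j : Fin p, (i : ℕ) < m → (j : ℕ) = (i : ℕ) + 1 →
      N i j = -1 ∧ N j i = -1)
    (hzero : ∀ i j : Fin p, (i : ℕ) < m →
      ((j : ℕ) + 1 < (i : ℕ) ∨ (i : ℕ) + 1 < (j : ℕ)) →
      N i j = 0 ∧ N j i = 0) :
    N.det =
      (m + 1) * (N.submatrix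
          (fun k : Fin (p - m) => (⟨m + (k : ℕ), by have := k.2; omega⟩ : Fin p))
          (fun k : Fin (p - m) => (⟨m + (k : ℕ), by have := k.2; omega⟩ : Fin p))).det
      - m * (N.submatrix
          (fun k : Fin (p - m - 1) => (⟨m + 1 + (k : ℕ), by have := k.2; omega⟩ : Fin p))
          (fun k : Fin (p - m - 1) => (⟨m + 1 + (k : ℕ), by have := k.2; omega⟩ : Fin p))).det :=
  chain_aux p hp m hm N hdiag hsub hzero
end

section
/- Let P ∈ ℚ[X₀,…,X_{n−1}] have degree at most 2 in each variable. If there exists an integer N such that for all integers k₀,…,k_{n−1} ≥ N the value P(k₀,…,k_{n−1}) is the square of a rational number, then there exists Q ∈ ℚ[X₀,…,X_{n−1}] with P = Q². -/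
/-!
Induct on the number of variables. Writing `P = A X₀² + B X₀ + C` with `A, B, C` in the other
variables, every specialisation of those variables to integers `≥ N` turns `P` into a
one-variable quadratic that is a square at all large integers, hence the square of a linear
polynomial. So `A` and `C` take square values on an infinite box and are squares `D²`, `E²` by
induction, while `B² - 4AC` vanishes on that box; hence `B = ±2DE` and `P = (D X₀ ± E)²`.

In one variable, clear denominators. If `f(K) = s²` and `f(K + 1) = t²` with `0 ≤ s < t`, then
`c = t - s` satisfies `2cs = L - F` with `L = 2AK + B` and `F = c² - A`, and squaring gives
`F (4s² + 2L - F) = B² - 4AC`. For large `K` the second factor exceeds the discriminant in absolute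
value, so `F = 0`, i.e. `A = c²`, which then determines `B` and `C`.
-/

open MvPolynomial

theorem Int.exists_sq_linear_of_consecutive_sq {A B C K s t : ℤ} (hs0 : 0 ≤ s) (hst : s < t)
    (hs : A * K ^ 2 + B * K + C = s ^ 2) (ht : A * (K + 1) ^ 2 + B * (K + 1) + C = t ^ 2)
    (hΔ : |B ^ 2 - 4 * A * C| < 4 * s ^ 2 + 2 * A * K + B) :
    ∃ e m : ℤ, A = e ^ 2 ∧ B = 2 * e * m ∧ C = m ^ 2 := by
  set c := t - s
  have hc : 2 * c * s + c ^ 2 = 2 * A * K + A + B := by linear_combination hs - ht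
  set F := c ^ 2 - A
  have hFG : F * (4 * s ^ 2 + 2 * (2 * A * K + B) - F) = B ^ 2 - 4 * A * C := by
    linear_combination (2 * c * s + 2 * A * K + B - F) * hc + 4 * A * hs
  have hF : F = 0 := by
    by_contra hF
    have hFL : F ≤ 2 * A * K + B := by nlinarith
    have hG : 0 < 4 * s ^ 2 + 2 * (2 * A * K + B) - F := by
      linarith [abs_nonneg (B ^ 2 - 4 * A * C)]
    rw [← hFG, abs_mul, abs_of_pos hG] at hΔ
    nlinarith [Int.one_le_abs hF]
  exact ⟨c, s - c * K, by linear_combination -hF, by linear_combination (2 * K + 1) * hF - hc,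
    by linear_combination hs + K ^ 2 * hF - K * ((2 * K + 1) * hF - hc)⟩

theorem IsSquare.exists_nonneg_eq_sq {R : Type*} [Ring R] [LinearOrder R] [IsOrderedRing R]
    {a : R} (h : IsSquare a) : ∃ s, 0 ≤ s ∧ a = s ^ 2 := by
  obtain ⟨r, rfl⟩ := h
  exact ⟨|r|, abs_nonneg r, by rw [sq_abs, pow_two]⟩

theorem Int.exists_sq_linear_of_eventually_isSquare {A B C N : ℤ}
    (h : ∀ k ≥ N, IsSquare (A * k ^ 2 + B * k + C)) :
    ∃ e m : ℤ, A = e ^ 2 ∧ B = 2 * e * m ∧ C = m ^ 2 := by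
  set K := max N (|B| + |C| + |B ^ 2 - 4 * A * C| + 1)
  have hK : |B| + |C| + |B ^ 2 - 4 * A * C| + 1 ≤ K := le_max_right _ _
  obtain ⟨s, hs0, hs⟩ := (h K (le_max_left _ _)).exists_nonneg_eq_sq
  obtain ⟨t, ht0, ht⟩ := (h (K + 1) (by omega)).exists_nonneg_eq_sq
  have hB₀ := abs_nonneg B; have hC₀ := abs_nonneg C; have hΔ₀ := abs_nonneg (B ^ 2 - 4 * A * C)
  have hB₁ := neg_abs_le B; have hC₁ := neg_abs_le C; have hC₂ := le_abs_self C
  have hK0 : 0 ≤ K := by linarith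
  have hgrowth (hAB : 0 < 2 * A * K + A + B)
      (hbound : |B ^ 2 - 4 * A * C| < 4 * s ^ 2 + 2 * A * K + B) :
      ∃ e m : ℤ, A = e ^ 2 ∧ B = 2 * e * m ∧ C = m ^ 2 :=
    Int.exists_sq_linear_of_consecutive_sq hs0
      (lt_of_pow_lt_pow_left₀ 2 ht0 (by linear_combination hAB + ht - hs)) hs ht hbound
  rcases lt_trichotomy A 0 with hA | rfl | hA
  · nlinarith [mul_le_mul_of_nonneg_right (show A ≤ -1 by omega) (sq_nonneg K),
      mul_le_mul_of_nonneg_right (le_abs_self B) hK0]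
  · rcases lt_trichotomy B 0 with hB | rfl | hB
    · nlinarith
    · exact ⟨0, s, by ring, by ring, by linear_combination hs⟩
    · have hΔ : |B ^ 2 - 4 * 0 * C| = B ^ 2 := by rw [mul_zero, zero_mul, sub_zero, abs_sq]
      refine hgrowth (by linarith) ?_
      nlinarith [mul_le_mul_of_nonneg_right (show 1 ≤ B by omega) hK0]
  · have hAK := mul_le_mul_of_nonneg_right (show 1 ≤ A by omega) hK0
    exact hgrowth (by linarith) (by nlinarith)

theorem Rat.exists_intCast_eq_mul_of_den_dvd {q : ℚ} {d : ℕ} (h : q.den ∣ d) :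
    ∃ z : ℤ, (z : ℚ) = q * d := by
  obtain ⟨j, rfl⟩ := h
  exact ⟨q.num * j, by push_cast; rw [← Rat.mul_den_eq_num]; ring⟩

theorem Rat.exists_sq_linear_of_eventually_isSquare {a b c : ℚ} {N : ℤ}
    (h : ∀ k : ℤ, N ≤ k → IsSquare (a * k ^ 2 + b * k + c)) :
    ∃ u v : ℚ, a = u ^ 2 ∧ b = 2 * u * v ∧ c = v ^ 2 := by
  set d := a.den * b.den * c.den
  have hd : (d : ℚ) ≠ 0 := by positivity
  obtain ⟨A, hA⟩ := exists_intCast_eq_mul_of_den_dvd (q := a) (d := d) ⟨b.den * c.den, by ring⟩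
  obtain ⟨B, hB⟩ := exists_intCast_eq_mul_of_den_dvd (q := b) (d := d) ⟨a.den * c.den, by ring⟩
  obtain ⟨C, hC⟩ := exists_intCast_eq_mul_of_den_dvd (q := c) (d := d) ⟨a.den * b.den, by ring⟩
  obtain ⟨e, m, he, hm, hme⟩ := Int.exists_sq_linear_of_eventually_isSquare
    (A := A * d) (B := B * d) (C := C * d) (N := N) fun k hk => by
      have hcast : ((A * d * k ^ 2 + B * d * k + C * d : ℤ) : ℚ)
          = d ^ 2 * (a * k ^ 2 + b * k + c) := by
        push_cast [hA, hB, hC]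
        ring
      rw [← Rat.isSquare_intCast_iff, hcast]
      exact (IsSquare.sq _).mul (h k hk)
  have he' : (A * d : ℚ) = e ^ 2 := mod_cast he
  have hm' : (B * d : ℚ) = 2 * e * m := mod_cast hm
  have hme' : (C * d : ℚ) = m ^ 2 := mod_cast hme
  refine ⟨e / d, m / d, ?_, ?_, ?_⟩ <;> field_simp
  · linear_combination he' - d * hA
  · linear_combination hm' - d * hB
  · linear_combination hme' - d * hC

theorem Polynomial.eq_quadratic_of_natDegree_le_two {R : Type*} [Semiring R] {p : Polynomial R}
    (h : p.natDegree ≤ 2) :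
    p = C (p.coeff 2) * X ^ 2 + C (p.coeff 1) * X + C (p.coeff 0) := by
  conv_lhs => rw [p.as_sum_range_C_mul_X_pow' (Nat.lt_succ_of_le h)]
  simp only [Finset.sum_range_succ, Finset.sum_range_zero, pow_zero, pow_one, mul_one, zero_add]
  abel

namespace MvPolynomial

variable {R : Type*} [CommRing R] [IsDomain R]

theorem exists_sq_of_isSquare_eval_pi (S : Set R) (hS : S.Infinite)
    (hquad : ∀ a b c : R, (∀ x ∈ S, IsSquare (a * x ^ 2 + b * x + c)) →
      ∃ u v, a = u ^ 2 ∧ b = 2 * u * v ∧ c = v ^ 2)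
    {n : ℕ} (P : MvPolynomial (Fin n) R) (hdeg : ∀ i, degreeOf i P ≤ 2)
    (h : ∀ x ∈ Set.univ.pi fun _ => S, IsSquare (eval x P)) :
    ∃ Q, P = Q ^ 2 := by
  induction n with
  | zero =>
    obtain ⟨r, rfl⟩ := C_surjective (Fin 0) P
    obtain ⟨y, hy⟩ := hS.nonempty
    obtain ⟨u, hu⟩ := h (fun _ => y) fun _ _ => hy
    exact ⟨C u, by rw [eval_C] at hu; rw [hu, ← map_pow, sq]⟩
  | succ n ih =>
    have hp := Polynomial.eq_quadratic_of_natDegree_le_two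
      ((natDegree_finSuccEquiv P).trans_le (hdeg 0))
    set A := (finSuccEquiv R n P).coeff 2
    set B := (finSuccEquiv R n P).coeff 1
    set C := (finSuccEquiv R n P).coeff 0
    have hcoeffs (x) (hx : x ∈ Set.univ.pi fun _ => S) :
        ∃ u v, eval x A = u ^ 2 ∧ eval x B = 2 * u * v ∧ eval x C = v ^ 2 := by
      refine hquad _ _ _ fun y hy => ?_
      convert h (Fin.cons y x) fun i _ => Fin.cases hy (fun j => hx j trivial) i using 1
      rw [eval_eq_eval_mv_eval', hp]
      simp
    have hdeg_coeff (i : ℕ) (j : Fin n) : degreeOf j ((finSuccEquiv R n P).coeff i) ≤ 2 :=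
      (degreeOf_coeff_finSuccEquiv P j i).trans (hdeg j.succ)
    obtain ⟨D, hD⟩ := ih A (hdeg_coeff 2) fun x hx => by
      obtain ⟨u, v, hu, -, -⟩ := hcoeffs x hx
      exact hu ▸ IsSquare.sq u
    obtain ⟨E, hE⟩ := ih C (hdeg_coeff 0) fun x hx => by
      obtain ⟨u, v, -, -, hv⟩ := hcoeffs x hx
      exact hv ▸ IsSquare.sq v
    have hB : B ^ 2 = (2 * D * E) ^ 2 := by
      refine funext_set (fun _ => S) (fun _ => hS) fun x hx => ?_
      obtain ⟨u, v, hu, huv, hv⟩ := hcoeffs x hx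
      rw [hD, map_pow] at hu
      rw [hE, map_pow] at hv
      simp only [map_pow, map_mul, map_ofNat]
      linear_combination (eval x B + 2 * u * v) * huv - 4 * eval x E ^ 2 * hu - 4 * u ^ 2 * hv
    obtain ⟨E', hBE', hCE'⟩ : ∃ E', B = 2 * D * E' ∧ C = E' ^ 2 := by
      rcases sq_eq_sq_iff_eq_or_eq_neg.1 hB with hB' | hB'
      · exact ⟨E, hB', hE⟩
      · exact ⟨-E, by rw [hB']; ring, by rw [hE]; ring⟩
    refine ⟨(finSuccEquiv R n).symm (Polynomial.C D * Polynomial.X + Polynomial.C E'), ?_⟩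
    rw [← map_pow, AlgEquiv.eq_symm_apply, hp, hD, hBE', hCE']
    simp only [map_pow, map_mul, map_ofNat]
    ring

end MvPolynomial

/-- Let `P ∈ ℚ[X₀,…,X_{n-1}]` have degree at most `2` in each variable.
If there is an integer `N` such that `P(k₀,…,k_{n-1})` is a square of a rational for
all integers `k₀,…,k_{n-1} ≥ N`, then `P = Q²` for some polynomial `Q`. -/
theorem exists_sq_of_eventually_square_values
    (n : ℕ) (P : MvPolynomial (Fin n) ℚ)
    (hdeg : ∀ i, degreeOf i P ≤ 2)
    (N : ℤ)
    (h : ∀ k : Fin n → ℤ, (∀ i, N ≤ k i) →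
      ∃ r : ℚ, eval (fun i => (k i : ℚ)) P = r ^ 2) :
    ∃ Q : MvPolynomial (Fin n) ℚ, P = Q ^ 2 := by
  refine exists_sq_of_isSquare_eval_pi (Int.cast '' Set.Ici N)
    ((Set.Ici_infinite N).image Int.cast_injective.injOn)
    (fun a b c hsq => Rat.exists_sq_linear_of_eventually_isSquare fun k hk => hsq _ ⟨k, hk, rfl⟩)
    P hdeg fun x hx => ?_
  choose k hkN hk using fun i => hx i trivial
  obtain rfl : (fun i => (k i : ℚ)) = x := funext hk
  obtain ⟨r, hr⟩ := h k hkN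
  exact hr ▸ IsSquare.sq r
end

section
/- Let P ∈ ℚ[X] be a polynomial in one variable such that P(k) is the square of a rational number for all sufficiently large integers k. Then P = Q² for some Q ∈ ℚ[X]. -/
open Polynomial Filter

/-- A rational whose square is an integer is an integer. -/
lemma aux_rat_sq_int (q : ℚ) (n : ℤ) (h : q ^ 2 = (n : ℚ)) : ∃ s : ℤ, (s : ℚ) = q := by
  have hint : IsIntegral ℤ q := by
    refine ⟨X ^ 2 - C n, monic_X_pow_sub_C _ (by norm_num), ?_⟩
    rw [eval₂_sub, eval₂_X_pow, eval₂_C, h]; simp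
  exact IsIntegrallyClosed.isIntegral_iff.mp hint

/-- Clear denominators of a rational polynomial. -/
lemma aux_clear_denoms (p : Polynomial ℚ) :
    ∃ (d : ℤ) (q : Polynomial ℤ), d ≠ 0 ∧ q.map (Int.castRingHom ℚ) = C (d : ℚ) * p := by
  obtain ⟨b, hb⟩ := IsLocalization.integerNormalization_map_to_map (nonZeroDivisors ℤ) p
  refine ⟨(b : ℤ), IsLocalization.integerNormalization (nonZeroDivisors ℤ) p,
    nonZeroDivisors.coe_ne_zero b, ?_⟩
  have h2 : (algebraMap ℤ ℚ) = Int.castRingHom ℚ := rfl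
  rw [h2] at hb
  rw [hb, zsmul_eq_mul, ← Polynomial.C_eq_intCast]
/-- An integer exactly divisible by a prime, divided by a unit-to-p integer, is not a rational square. -/
lemma aux_not_sq (p n d : ℤ) (hp : Prime p) (hpn : p ∣ n) (hp2 : ¬ p ^ 2 ∣ n)
    (hpd : ¬ p ∣ d) (r : ℚ) (h : (n : ℚ) = (d : ℚ) * r ^ 2) : False := by
  have hsq : ((d : ℚ) * r) ^ 2 = ((d * n : ℤ) : ℚ) := by push_cast; rw [h]; ring
  obtain ⟨s, hs⟩ := aux_rat_sq_int _ _ hsq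
  have hs2 : s ^ 2 = d * n := by
    have : ((s ^ 2 : ℤ) : ℚ) = ((d * n : ℤ) : ℚ) := by push_cast [← hs] at hsq ⊢; linarith
    exact_mod_cast this
  have hps : p ∣ s := hp.dvd_of_dvd_pow (n := 2) (by rw [hs2]; exact Dvd.dvd.mul_left hpn d)
  obtain ⟨n₀, hn₀⟩ := hpn
  obtain ⟨s₀, hs₀⟩ := hps
  have : p ∣ d * n₀ := by
    have h1 : p * (p * s₀ ^ 2) = p * (d * n₀) := by
      have : (p * s₀) ^ 2 = d * (p * n₀) := by rw [← hs₀, ← hn₀]; exact hs2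
      ring_nf
      ring_nf at this
      linarith
    exact ⟨s₀ ^ 2, (mul_left_cancel₀ hp.ne_zero h1).symm⟩
  rcases hp.dvd_mul.mp this with h' | h'
  · exact hpd h'
  · exact hp2 (by obtain ⟨w, hw⟩ := h'; exact ⟨w, by rw [hn₀, hw]; ring⟩)

/-- A nonconstant integer polynomial has a prime dividing one of its values, avoiding M. -/
lemma aux_exists_prime (P : Polynomial ℤ) (hP : 1 ≤ P.natDegree) (M : ℤ) (hM : M ≠ 0) :
    ∃ p : ℤ, Prime p ∧ ¬ p ∣ M ∧ ∃ k : ℤ, p ∣ P.eval k := by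
  set c : ℤ := P.eval 0 with hc
  by_cases hc0 : c = 0
  · obtain ⟨q, hq, hq'⟩ := Nat.exists_infinite_primes (M.natAbs + 1)
    refine ⟨(q : ℤ), Int.prime_iff_natAbs_prime.mpr (by simpa using  hq'), ?_, 0, by rw [← hc, hc0]; exact dvd_zero _⟩
    intro hdvd
    have h3 : q ∣ M.natAbs := Int.natCast_dvd.mp hdvd
    have := Nat.le_of_dvd (Int.natAbs_pos.mpr hM) h3
    omega
  · have key : ∀ t : ℤ, ∃ u : ℤ, P.eval (c * M * t) = c * (1 + M * u) := by
      intro t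
      have h1 : c * M * t - 0 ∣ P.eval (c * M * t) - P.eval 0 := sub_dvd_eval_sub _ _ _
      rw [sub_zero] at h1
      have h2 : c * M ∣ P.eval (c * M * t) - c := dvd_trans ⟨t, rfl⟩ h1
      obtain ⟨w, hw⟩ := h2
      exact ⟨w, by linarith [hw]⟩
    by_cases hgood : ∃ t u : ℤ, P.eval (c * M * t) = c * (1 + M * u) ∧ (1 + M * u).natAbs ≠ 1
    · obtain ⟨t, u, he, hne⟩ := hgood
      obtain ⟨p, hp, hpd⟩ := Int.exists_prime_and_dvd hne
      refine ⟨p, hp, ?_, c * M * t, he ▸ Dvd.dvd.mul_left hpd c⟩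
      intro hdvd
      exact hp.not_dvd_one (by
        have : p ∣ 1 + M * u - M * u := dvd_sub hpd (hdvd.mul_right u)
        simpa using this)
    · push_neg at hgood
      -- every value is c or -c
      have hval : ∀ t : ℤ, P.eval (c * M * t) = c ∨ P.eval (c * M * t) = -c := by
        intro t
        obtain ⟨u, hu⟩ := key t
        have h1 := hgood t u hu
        rw [Int.natAbs_eq_iff] at h1
        rcases h1 with h1 | h1
        · left; rw [hu, h1]; push_cast; ring
        · right; rw [hu, h1]; push_cast; ring
      -- one of the two fibers is infinite
      have hcM : c * M ≠ 0 := mul_ne_zero hc0 hM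
      have hsplit : {t : ℤ | P.eval (c * M * t) = c}.Infinite ∨
          {t : ℤ | P.eval (c * M * t) = -c}.Infinite := by
        by_contra hcon
        push_neg at hcon
        have : (Set.univ : Set ℤ).Finite := by
          refine Set.Finite.subset (hcon.1.union hcon.2) fun t _ => ?_
          rcases hval t with h' | h'
          · exact Or.inl h'
          · exact Or.inr h'
        exact Set.infinite_univ this
      have hcontr : ∀ v : ℤ, {t : ℤ | P.eval (c * M * t) = v}.Infinite → False := by
        intro v hv
        have hroot : (P.comp (C (c * M) * X) - C v) = 0 := by
          apply eq_zero_of_infinite_isRoot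
          apply hv.mono
          intro t ht
          simp only [Set.mem_setOf_eq, IsRoot, eval_sub, eval_comp, eval_mul, eval_C, eval_X]
          rw [ht]; ring
        have hcomp : P.comp (C (c * M) * X) = C v := by
          rwa [sub_eq_zero] at hroot
        have hdeg : (P.comp (C (c * M) * X)).natDegree = P.natDegree := by
          rw [natDegree_comp, natDegree_C_mul_X _ hcM, mul_one]
        rw [hcomp, natDegree_C] at hdeg
        omega
      rcases hsplit with hv | hv
      · exact (hcontr c hv).elim
      · exact (hcontr (-c) hv).elim
lemma aux_core (P : Polynomial ℚ) (hsf : Squarefree P) (hdeg : 1 ≤ P.natDegree)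
    (h : ∀ᶠ k : ℤ in atTop, ∃ r : ℚ, P.eval (k : ℚ) = r ^ 2) : False := by
  have hsep : P.Separable := (PerfectField.separable_iff_squarefree).mpr hsf
  obtain ⟨U, V, hUV⟩ := hsep
  obtain ⟨d, P₀, hd, hP₀⟩ := aux_clear_denoms P
  obtain ⟨a, A, ha, hA⟩ := aux_clear_denoms U
  obtain ⟨b, B, hb, hB⟩ := aux_clear_denoms V
  have hinj : Function.Injective (Int.castRingHom ℚ) := Int.cast_injective
  -- integer Bezout identity
  have key : A * C b * P₀ + B * C a * P₀.derivative = C (a * b * d) := by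
    apply map_injective (Int.castRingHom ℚ) hinj
    rw [Polynomial.map_add, Polynomial.map_mul, Polynomial.map_mul, Polynomial.map_mul,
      Polynomial.map_mul, Polynomial.map_C, Polynomial.map_C, hA, hB,
      ← derivative_map, hP₀, Polynomial.map_C, derivative_C_mul]
    simp only [eq_intCast, Int.cast_mul, C_mul]
    linear_combination (C (a : ℚ) * C (b : ℚ) * C (d : ℚ)) * hUV
  -- evaluated Bezout
  have keval : ∀ k : ℤ, A.eval k * b * P₀.eval k + B.eval k * a * P₀.derivative.eval k
      = a * b * d := by
    intro k
    have := congrArg (Polynomial.eval k) key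
    simpa using this
  -- degree of P₀
  have hP₀deg : 1 ≤ P₀.natDegree := by
    have h1 : (P₀.map (Int.castRingHom ℚ)).natDegree = P₀.natDegree :=
      natDegree_map_eq_of_injective hinj P₀
    rw [hP₀, natDegree_C_mul (by exact_mod_cast hd)] at h1
    omega
  obtain ⟨p, hp, hpM, k₀, hpk⟩ := aux_exists_prime P₀ hP₀deg (a * b * d)
    (mul_ne_zero (mul_ne_zero ha hb) hd)
  have hpa : ¬ p ∣ a := fun h' => hpM (((h'.mul_right b).mul_right d))
  have hpb : ¬ p ∣ b := fun h' => hpM (((h'.mul_left a).mul_right d))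
  have hpd : ¬ p ∣ d := fun h' => hpM (h'.mul_left (a * b))
  -- find k₁ with exact divisibility
  have step : ∃ k₁ : ℤ, p ∣ P₀.eval k₁ ∧ ¬ p ^ 2 ∣ P₀.eval k₁ := by
    by_cases h2 : p ^ 2 ∣ P₀.eval k₀
    · have hd' : ¬ p ∣ P₀.derivative.eval k₀ := by
        intro hdvd
        apply hpM
        rw [← keval k₀]
        exact dvd_add ((hpk.mul_left _ : p ∣ A.eval k₀ * b * P₀.eval k₀))
          ((hdvd.mul_left _ : p ∣ B.eval k₀ * a * P₀.derivative.eval k₀))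
      obtain ⟨z, hz⟩ := P₀.binomExpansion k₀ p
      refine ⟨k₀ + p, ?_, ?_⟩
      · rw [hz]
        exact dvd_add (dvd_add (dvd_trans (dvd_pow_self p two_ne_zero) h2) (dvd_mul_left p _))
          (by exact Dvd.dvd.mul_left (dvd_pow_self p two_ne_zero) z)
      · intro hcon
        rw [hz] at hcon
        obtain ⟨w, hw⟩ := hcon
        obtain ⟨e, he⟩ := h2
        have h6 : P₀.derivative.eval k₀ * p = (p * (w - z - e)) * p := by
          linear_combination hw - he
        exact hd' ⟨w - z - e, mul_right_cancel₀ hp.ne_zero h6⟩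
    · exact ⟨k₀, hpk, h2⟩
  obtain ⟨k₁, hk₁, hk₁'⟩ := step
  -- the whole arithmetic progression k₁ + j p² works
  have all : ∀ j : ℤ, p ∣ P₀.eval (k₁ + j * p ^ 2) ∧ ¬ p ^ 2 ∣ P₀.eval (k₁ + j * p ^ 2) := by
    intro j
    have hdiff : p ^ 2 ∣ P₀.eval (k₁ + j * p ^ 2) - P₀.eval k₁ := by
      refine dvd_trans ⟨j, by ring⟩ (sub_dvd_eval_sub _ _ _)
    constructor
    · have := (dvd_pow_self p two_ne_zero).trans hdiff
      have h5 : P₀.eval (k₁ + j * p ^ 2) = (P₀.eval (k₁ + j * p ^ 2) - P₀.eval k₁) + P₀.eval k₁ := by ring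
      rw [h5]; exact dvd_add this hk₁
    · intro hcon
      apply hk₁'
      have h5 : P₀.eval k₁ = P₀.eval (k₁ + j * p ^ 2) - (P₀.eval (k₁ + j * p ^ 2) - P₀.eval k₁) := by ring
      rw [h5]; exact hcon.sub hdiff
  -- choose a large k in the progression
  have hppos : 0 < p ^ 2 := by
    have := hp.ne_zero
    positivity
  have htend : Tendsto (fun j : ℤ => k₁ + j * p ^ 2) atTop atTop := by
    rw [tendsto_atTop]
    intro b
    filter_upwards [eventually_ge_atTop (max 0 (b - k₁))] with j hj
    have h0 : 0 ≤ j := le_trans (le_max_left _ _) hj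
    have h1 : b - k₁ ≤ j := le_trans (le_max_right _ _) hj
    nlinarith
  obtain ⟨j, hj⟩ := (htend.eventually h).exists
  obtain ⟨r, hr⟩ := hj
  set k : ℤ := k₁ + j * p ^ 2 with hk
  -- relate eval of P₀ and P at k
  have hrel : ((P₀.eval k : ℤ) : ℚ) = (d : ℚ) * P.eval (k : ℚ) := by
    have := congrArg (Polynomial.eval ((k : ℤ) : ℚ)) hP₀
    rw [eval_intCast_map] at this
    simpa using this
  exact aux_not_sq p (P₀.eval k) d hp (all j).1 (all j).2 hpd r (by rw [hrel, hr])
lemma aux_main : ∀ n : ℕ, ∀ P : Polynomial ℚ, P.natDegree ≤ n →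
    (∀ᶠ k : ℤ in atTop, ∃ r : ℚ, P.eval (k : ℚ) = r ^ 2) → ∃ Q, P = Q ^ 2 := by
  have const : ∀ P : Polynomial ℚ, P.natDegree = 0 →
      (∀ᶠ k : ℤ in atTop, ∃ r : ℚ, P.eval (k : ℚ) = r ^ 2) → ∃ Q, P = Q ^ 2 := by
    intro P h0 h
    obtain ⟨a, ha⟩ := natDegree_eq_zero.mp h0
    obtain ⟨k, r, hr⟩ := h.exists
    refine ⟨C r, ?_⟩
    rw [← ha] at hr ⊢
    rw [eval_C] at hr
    rw [hr, C_pow]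
  intro n
  induction n with
  | zero => intro P hd h; exact const P (Nat.le_zero.mp hd) h
  | succ n ih =>
    intro P hdeg h
    by_cases h0 : P.natDegree = 0
    · exact const P h0 h
    have hP0 : P ≠ 0 := fun hz => h0 (by rw [hz]; simp)
    have hnsf : ¬ Squarefree P := fun hsf => aux_core P hsf (by omega) h
    rw [Squarefree] at hnsf
    push_neg at hnsf
    obtain ⟨x, hxx, hxu⟩ := hnsf
    obtain ⟨P₁, hP₁⟩ := hxx
    have hx0 : x ≠ 0 := by rintro rfl; rw [hP₁] at hP0; simp at hP0
    have hP₁0 : P₁ ≠ 0 := by rintro rfl; rw [hP₁] at hP0; simp at hP0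
    have hxd : 1 ≤ x.natDegree := by
      by_contra hcon
      push_neg at hcon
      obtain ⟨a, ha⟩ := natDegree_eq_zero.mp (Nat.lt_one_iff.mp hcon)
      have : a ≠ 0 := fun hz => hx0 (by rw [← ha, hz, map_zero])
      exact hxu (ha ▸ isUnit_C.mpr this.isUnit)
    -- eventual squares for P₁
    have hxev : ∀ᶠ k : ℤ in atTop, x.eval (k : ℚ) ≠ 0 := by
      have hfin : {k : ℤ | x.eval (k : ℚ) = 0}.Finite := by
        have : {k : ℤ | x.eval (k : ℚ) = 0} = (fun k : ℤ => (k : ℚ)) ⁻¹' {y : ℚ | x.IsRoot y} := rfl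
        rw [this]
        exact (finite_setOf_isRoot hx0).preimage (fun s _ t _ hst => by exact_mod_cast hst)
      have := Set.Finite.eventually_cofinite_notMem hfin
      rw [Int.cofinite_eq] at this
      exact this.filter_mono le_sup_right
    have hev : ∀ᶠ k : ℤ in atTop, ∃ r : ℚ, P₁.eval (k : ℚ) = r ^ 2 := by
      filter_upwards [h, hxev] with k hk hx
      obtain ⟨r, hr⟩ := hk
      refine ⟨r / x.eval (k : ℚ), ?_⟩
      rw [hP₁] at hr
      simp only [eval_mul] at hr
      field_simp
      nlinarith [hr]
    have hdeg₁ : P₁.natDegree ≤ n := by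
      have := congrArg natDegree hP₁
      rw [natDegree_mul (mul_ne_zero hx0 hx0) hP₁0, natDegree_mul hx0 hx0] at this
      omega
    obtain ⟨Q₁, hQ₁⟩ := ih P₁ hdeg₁ hev
    exact ⟨x * Q₁, by rw [hP₁, hQ₁]; ring⟩

/-- A univariate rational polynomial whose values at all sufficiently
large integers are squares of rationals is the square of a polynomial. -/
theorem polynomial_sq_of_eventually_square_values
    (P : Polynomial ℚ) (N : ℤ)
    (h : ∀ k : ℤ, N ≤ k → ∃ r : ℚ, P.eval (k : ℚ) = r ^ 2) :
    ∃ Q : Polynomial ℚ, P = Q ^ 2 := by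
  refine aux_main P.natDegree P le_rfl ?_
  filter_upwards [eventually_ge_atTop N] with k hk
  exact h k hk
end

section
/- For N ≥ 2 and A ⊆ ℤ/Nℤ, the homogeneous part of degree N−1 of P_A consists exactly of the monomials Π_{i ≠ a} X_i for a ∈ A (each with coefficient 1), so it has exactly Card(A) monomials. Consequently the map A ↦ P_A from subsets of ℤ/Nℤ to polynomials is injective, and the family {P_A : A ⊆ ℤ/Nℤ} has 2^N elements. -/
open scoped Classical
open MvPolynomial

/-- `B` is a *generating allowed subset* of `ℤ/Nℤ` relative to `A`:
either a singleton `{a}` with `a ∈ A`, or a pair `{k, k+1}` contained in a single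
interval of the partition of `ℤ/Nℤ` determined by `A` (equivalently, `k ∉ A`). -/
def GenAllowed {N : ℕ} [NeZero N] (A B : Finset (ZMod N)) : Prop :=
  (∃ a ∈ A, B = {a}) ∨ (∃ k : ZMod N, k ≠ k + 1 ∧ k ∉ A ∧ B = {k, k + 1})

/-- `B` is an *allowed subset* relative to `A`: a proper subset of `ℤ/Nℤ` admitting a
(possibly empty) partition into generating allowed subsets. -/
def IsAllowed {N : ℕ} [NeZero N] (A B : Finset (ZMod N)) : Prop :=
  B ≠ Finset.univ ∧ ∃ 𝒞 : Finset (Finset (ZMod N)),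
    (∀ C ∈ 𝒞, GenAllowed A C) ∧
    (𝒞 : Set (Finset (ZMod N))).PairwiseDisjoint id ∧
    𝒞.sup id = B

/-- The polynomial `P_A = Σ_{B allowed} Π_{i ∉ B} X_i`. -/
noncomputable def polyP {N : ℕ} [NeZero N] (A : Finset (ZMod N)) :
    MvPolynomial (ZMod N) ℤ :=
  ∑ B ∈ Finset.univ.filter (fun B => IsAllowed A B), ∏ i ∈ Bᶜ, X i

namespace PolyPAux

variable {N : ℕ} [NeZero N]

noncomputable def eS (s : Finset (ZMod N)) : (ZMod N) →₀ ℕ :=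
  ∑ i ∈ s, Finsupp.single i 1

lemma eS_apply (s : Finset (ZMod N)) (j : ZMod N) :
    eS s j = if j ∈ s then 1 else 0 := by
  classical
  simp [eS, Finsupp.finset_sum_apply, Finsupp.single_apply]

lemma eS_inj : Function.Injective (eS (N := N)) := by
  intro s t h
  ext j
  have h2 : eS s j = eS t j := by rw [h]
  rw [eS_apply, eS_apply] at h2
  by_cases hs : j ∈ s <;> by_cases ht : j ∈ t <;> simp_all

lemma prod_X (s : Finset (ZMod N)) :
    (∏ i ∈ s, (X i : MvPolynomial (ZMod N) ℤ)) = monomial (eS s) 1 := by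
  classical
  induction s using Finset.induction_on with
  | empty => simp [eS]
  | insert _ _ h ih =>
    rw [Finset.prod_insert h, ih, X, monomial_mul, one_mul]
    congr 1
    rw [eS, eS, Finset.sum_insert h]

lemma eS_degree (s : Finset (ZMod N)) : (eS s).sum (fun _ e => e) = s.card := by
  classical
  induction s using Finset.induction_on with
  | empty => simp [eS]
  | @insert i s h ih =>
    rw [eS, Finset.sum_insert h]
    rw [Finsupp.sum_add_index' (fun _ => rfl) (fun _ _ _ => rfl)]
    rw [Finsupp.sum_single_index rfl]
    rw [show (∑ i ∈ s, Finsupp.single i (1:ℕ)).sum (fun _ e => e) = s.card from ih]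
    rw [Finset.card_insert_of_notMem h]
    exact Nat.add_comm 1 s.card

lemma allowed_singleton (hN : 2 ≤ N) (A : Finset (ZMod N)) (a : ZMod N) :
    IsAllowed A {a} ↔ a ∈ A := by
  constructor
  · rintro ⟨-, 𝒞, hgen, -, hsup⟩
    have ha : a ∈ 𝒞.sup id := by rw [hsup]; simp
    obtain ⟨C, hC, haC⟩ := Finset.mem_sup.1 ha
    have hCs : C ⊆ {a} := by
      have := Finset.le_sup (f := id) hC
      rw [hsup] at this; exact this
    have hCa : C = {a} :=
      le_antisymm hCs (Finset.singleton_subset_iff.2 haC)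
    rcases hgen C hC with ⟨a', ha', h⟩ | ⟨k, hk, -, h⟩
    · rw [hCa] at h
      obtain rfl : a = a' := Finset.singleton_injective h
      exact ha'
    · rw [hCa] at h
      have h1 : k ∈ ({a} : Finset (ZMod N)) := by rw [h]; simp
      have h2 : k + 1 ∈ ({a} : Finset (ZMod N)) := by rw [h]; simp
      simp only [Finset.mem_singleton] at h1 h2
      exact absurd (h1.trans h2.symm) hk
  · intro ha
    refine ⟨?_, {{a}}, ?_, ?_, by simp⟩
    · intro h
      have := congrArg Finset.card h
      simp only [Finset.card_singleton, Finset.card_univ, ZMod.card] at this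
      omega
    · intro C hC
      simp only [Finset.mem_singleton] at hC
      subst hC
      exact Or.inl ⟨a, ha, rfl⟩
    · simp

lemma coeff_polyP_at (A : Finset (ZMod N)) (s : Finset (ZMod N)) :
    MvPolynomial.coeff (eS s) (polyP A) = if IsAllowed A sᶜ then 1 else 0 := by
  classical
  unfold polyP
  rw [coeff_sum]
  simp_rw [prod_X, coeff_monomial]
  have key : ∀ B : Finset (ZMod N), (eS Bᶜ = eS s) ↔ (B = sᶜ) := by
    intro B
    constructor
    · intro h
      have := eS_inj h
      rw [← this, compl_compl]
    · rintro rfl; rw [compl_compl]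
  simp_rw [key]
  rw [Finset.sum_ite_eq' (Finset.univ.filter (fun B => IsAllowed A B)) sᶜ (fun _ => (1:ℤ))]
  simp [Finset.mem_filter]

lemma eS_compl_singleton (a : ZMod N) :
    eS ({a}ᶜ : Finset (ZMod N)) =
      Finsupp.equivFunOnFinite.symm fun i => if i = a then 0 else 1 := by
  ext j
  rw [eS_apply]
  simp only [Finset.mem_compl, Finset.mem_singleton,
    Finsupp.coe_equivFunOnFinite_symm]
  by_cases h : j = a <;> simp [h]

lemma exists_of_mem_support (A : Finset (ZMod N)) (d : (ZMod N) →₀ ℕ)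
    (hd : d ∈ (polyP A).support) : ∃ B, IsAllowed A B ∧ eS Bᶜ = d := by
  classical
  by_contra h
  push_neg at h
  apply MvPolynomial.mem_support_iff.1 hd
  unfold polyP
  rw [coeff_sum]
  apply Finset.sum_eq_zero
  intro B hB
  rw [prod_X, coeff_monomial, if_neg]
  exact h B (Finset.mem_filter.1 hB).2

lemma polyP_inj (hN : 2 ≤ N) : Function.Injective (polyP (N := N)) := by
  intro A A' h
  ext a
  have hc := congrArg (MvPolynomial.coeff (eS ({a}ᶜ : Finset (ZMod N)))) h
  rw [coeff_polyP_at, coeff_polyP_at, compl_compl,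
    allowed_singleton hN A a] at hc
  rw [allowed_singleton hN A' a] at hc
  by_cases h1 : a ∈ A <;> by_cases h2 : a ∈ A' <;> simp_all

end PolyPAux

open PolyPAux

/-- For `N ≥ 2` and `A ⊆ ℤ/Nℤ`, the degree-`(N-1)` homogeneous part of
`P_A` consists exactly of the monomials `Π_{i ≠ a} X_i` for `a ∈ A`, each with
coefficient `1`; consequently `A ↦ P_A` is injective and the family
`{P_A : A ⊆ ℤ/Nℤ}` has `2^N` elements. -/
theorem polyP_degree_N_sub_one_part
    (N : ℕ) [NeZero N] (hN : 2 ≤ N) :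
    (∀ A : Finset (ZMod N), ∀ a ∈ A,
      MvPolynomial.coeff
        (Finsupp.equivFunOnFinite.symm fun i : ZMod N => if i = a then 0 else 1)
        (polyP A) = 1) ∧
    (∀ A : Finset (ZMod N), ∀ d ∈ (polyP A).support,
      (d.sum fun _ e => e) = N - 1 →
      ∃ a ∈ A, d = Finsupp.equivFunOnFinite.symm fun i : ZMod N => if i = a then 0 else 1) ∧
    Function.Injective (fun A : Finset (ZMod N) => polyP A) ∧
    (Finset.univ.image (fun A : Finset (ZMod N) => polyP A)).card = 2 ^ N := by
  refine ⟨?_, ?_, ?_, ?_⟩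
  · intro A a ha
    rw [← eS_compl_singleton, coeff_polyP_at, compl_compl,
      if_pos ((allowed_singleton hN A a).2 ha)]
  · intro A d hd hdeg
    obtain ⟨B, hB, rfl⟩ := exists_of_mem_support A d hd
    rw [eS_degree] at hdeg
    have h1 : Bᶜ.card = N - B.card := by
      rw [Finset.card_compl, ZMod.card]
    have h2 : B.card ≤ N := by
      have := B.card_le_univ
      rwa [ZMod.card] at this
    have hcard : B.card = 1 := by omega
    obtain ⟨a, rfl⟩ := Finset.card_eq_one.1 hcard
    exact ⟨a, (allowed_singleton hN A a).1 hB, eS_compl_singleton a⟩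
  · exact polyP_inj hN
  · rw [Finset.card_image_of_injective _ (polyP_inj hN), Finset.card_univ,
      Fintype.card_finset, ZMod.card]
end

section
/- Let A ⊆ ℤ/Nℤ and let B be an allowed subset relative to A, with complement B' of cardinality N'. Let φ : B' → ℤ/N'ℤ be a bijection compatible with the induced cyclic actions, S_B the set of springs of B, and A' = φ(A ∩ B') ∪ φ(S_B). Then the map C ↦ φ(C ∩ B') is a bijection from {C ∈ 𝒫_A : B ⊆ C} onto 𝒫_{A'}. -/
open scoped Classical
open MvPolynomial

/-- `j` is a *spring* of `B` (relative to `A`): `j ∉ B` and some run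
`{j+1, …, j+k} ⊆ B` (`k ≥ 1`) ends at an element `j+k ∈ A`. -/
def IsSpring {N : ℕ} [NeZero N] (A B : Finset (ZMod N)) (j : ZMod N) : Prop :=
  j ∉ B ∧ ∃ k : ℕ, 1 ≤ k ∧
    (∀ l : ℕ, 1 ≤ l → l ≤ k → j + (l : ZMod N) ∈ B) ∧
    j + (k : ZMod N) ∈ A

/-!
Reading an allowed set `C` from a point outside it, an element of `C` that is not the right end
of a pair must be a singleton if it lies in `A` and the left end of a pair otherwise; so the
partition of `C` is unique, and `C` is allowed exactly when this reading never leaves `C`.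

Read `B ∪ D` with `D ⊆ B'` this way. Between two consecutive points of `B'` lies a run of `B`,
which is read as in `B` itself unless it is entered in the middle of a pair. In that case the
parity is shifted until the first element of `A` in the run, after which the two readings agree;
so the run is left in the middle of a pair exactly when it contains no element of `A`, that is,
when its left end is not a spring. Hence the reading of `B ∪ D` at the points of `B'` is, through
`φ`, the reading of `φ(D)` relative to `A'`.
-/

namespace Allowed

lemma mem_image_iff_of_injOn {α β : Type*} [DecidableEq β] {f : α → β}
    {s t : Finset α} (hf : Set.InjOn f s) (ht : t ⊆ s) {x : α} (hx : x ∈ s) :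
    f x ∈ t.image f ↔ x ∈ t := by
  rw [← Finset.mem_coe, Finset.coe_image, hf.mem_image_iff (Finset.coe_subset.2 ht) hx,
    Finset.mem_coe]

lemma bijOn_image_inter_compl {α β : Type*} [Fintype α] [DecidableEq α] [DecidableEq β]
    {B : Finset α} {φ : α → β} (hφ : Set.BijOn φ (Bᶜ : Finset α) Set.univ) :
    Set.BijOn (fun C => (C ∩ Bᶜ).image φ) {C | B ⊆ C} Set.univ := by
  refine ⟨fun _ _ => Set.mem_univ _, fun C₁ h₁ C₂ h₂ heq => ?_, fun C' _ => ?_⟩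
  · have := (Finset.image_eq_image_iff_of_injOn hφ.injOn Finset.inter_subset_right
      Finset.inter_subset_right).1 heq
    rw [← Finset.union_sdiff_of_subset h₁, ← Finset.union_sdiff_of_subset h₂,
      Finset.sdiff_eq_inter_compl, Finset.sdiff_eq_inter_compl, this]
  · obtain ⟨D, hD, rfl⟩ := Finset.subset_image_iff.1 fun y (_ : y ∈ C') => by
      obtain ⟨x, hx, rfl⟩ := hφ.surjOn (Set.mem_univ y)
      exact Finset.mem_image_of_mem φ hx
    refine ⟨B ∪ D, Finset.subset_union_left, ?_⟩
    simp only [Finset.union_inter_distrib_right, Finset.inter_compl, Finset.empty_union,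
      Finset.inter_eq_left.2 hD]

section PairStarts

variable {N : ℕ}

lemma val_add_one_of_ne [NeZero N] {a : ZMod N} (h : a + 1 ≠ 0) : (a + 1).val = a.val + 1 := by
  have hlt : a.val + 1 < N := by
    refine lt_of_le_of_ne (ZMod.val_lt a) fun hN => h ?_
    rw [← ZMod.natCast_zmod_val a, ← Nat.cast_add_one, hN, ZMod.natCast_self]
  rw [← ZMod.val_cast_of_lt hlt, Nat.cast_succ, ZMod.natCast_zmod_val]

lemma eq_univ_of_add_one_eq [NeZero N] {C : Finset (ZMod N)} {k : ZMod N} (hk : k ∈ C)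
    (h : k = k + 1) : C = Finset.univ := by
  have h1 : (1 : ZMod N) = 0 := by linear_combination -h
  refine Finset.eq_univ_of_forall fun y => ?_
  rwa [show y = k by linear_combination (y - k) * h1]

/-- `P` is the set of left ends of the pairs `{k, k + 1}` in a partition of `C` into
generating allowed subsets; the elements of `C` outside these pairs are the singletons. -/
structure PairStarts (A C P : Finset (ZMod N)) : Prop where
  subset : P ⊆ C
  notMem_A : ∀ k ∈ P, k ∉ A
  add_one_mem : ∀ k ∈ P, k + 1 ∈ C
  add_one_notMem : ∀ k ∈ P, k + 1 ∉ P
  mem_A : ∀ x ∈ C, x ∉ P → x - 1 ∉ P → x ∈ A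

lemma exists_pairStarts [NeZero N] {A C : Finset (ZMod N)} (h : IsAllowed A C) :
    ∃ P, PairStarts A C P := by
  obtain ⟨hne, 𝒞, hgen, hdisj, rfl⟩ := h
  have mem_sup : ∀ T ∈ 𝒞, ∀ x ∈ T, x ∈ 𝒞.sup id := fun T hT x hx =>
    Finset.mem_sup.2 ⟨T, hT, hx⟩
  refine ⟨Finset.univ.filter fun k => k ∉ A ∧ k ≠ k + 1 ∧ {k, k + 1} ∈ 𝒞,
    ?_, ?_, ?_, ?_, ?_⟩ <;>
    simp only [Finset.subset_iff, Finset.mem_filter, Finset.mem_univ, true_and, sub_add_cancel]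
  · intro k ⟨_, _, hk⟩
    exact mem_sup _ hk k (by simp)
  · exact fun k hk => hk.1
  · intro k ⟨_, _, hk⟩
    exact mem_sup _ hk (k + 1) (by simp)
  · rintro k ⟨-, hkk, hk⟩ ⟨-, -, hk₁⟩
    have hT := hdisj.elim_finset hk hk₁ (k + 1) (by simp) (by simp)
    have hkmem : k ∈ ({k + 1, k + 1 + 1} : Finset (ZMod N)) := hT ▸ by simp
    simp only [Finset.mem_insert, Finset.mem_singleton] at hkmem
    obtain hkmem | hkmem := hkmem
    · exact hkk hkmem
    -- `k + 2 = k` forces `N = 2`, and then the pair `{k, k + 1}` is all of `ℤ/2ℤ`.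
    refine hne (Finset.eq_univ_of_forall fun y => mem_sup _ hk y ?_)
    have hN : N ≤ 2 := Nat.le_of_dvd two_pos <| (ZMod.natCast_eq_zero_iff 2 N).1 <| by
      push_cast; linear_combination -hkmem
    have hy : y = k + ((y - k).val : ZMod N) := by rw [ZMod.natCast_zmod_val]; ring
    have : (y - k).val < 2 := (ZMod.val_lt (y - k)).trans_le hN
    interval_cases h : (y - k).val <;> simp [hy]
  · intro x hx hxP hx₁P
    obtain ⟨T, hT, hxT⟩ := Finset.mem_sup.1 hx
    rcases hgen T hT with ⟨a, ha, rfl⟩ | ⟨k, hkk, hkA, rfl⟩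
    · rwa [Finset.mem_singleton.1 hxT]
    · simp only [id, Finset.mem_insert, Finset.mem_singleton] at hxT
      rcases hxT with rfl | rfl
      · exact absurd ⟨hkA, hkk, hT⟩ hxP
      · exact absurd ⟨by simpa using hkA, by simpa using hkk, by simpa using hT⟩ hx₁P

/-- The generating allowed subset of `C` containing `y`. -/
def pairStartsBlock (P : Finset (ZMod N)) (y : ZMod N) : Finset (ZMod N) :=
  if y ∈ P then {y, y + 1} else if y - 1 ∈ P then {y - 1, y} else {y}

lemma PairStarts.block_eq {A C P : Finset (ZMod N)} (hP : PairStarts A C P) {x y : ZMod N}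
    (hx : x ∈ pairStartsBlock P y) : pairStartsBlock P x = pairStartsBlock P y := by
  unfold pairStartsBlock at hx
  split_ifs at hx with hy hy'
  · simp only [Finset.mem_insert, Finset.mem_singleton] at hx
    rcases hx with rfl | rfl
    · rfl
    · simp [pairStartsBlock, hy, hP.add_one_notMem y hy]
  · simp only [Finset.mem_insert, Finset.mem_singleton] at hx
    rcases hx with rfl | rfl
    · simp [pairStartsBlock, hy, hy']
    · rfl
  · rw [Finset.mem_singleton.1 hx]

lemma mem_pairStartsBlock_self (P : Finset (ZMod N)) (y : ZMod N) : y ∈ pairStartsBlock P y := by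
  unfold pairStartsBlock; split_ifs <;> simp

lemma PairStarts.block_subset {A C P : Finset (ZMod N)} (hP : PairStarts A C P) {y : ZMod N}
    (hy : y ∈ C) : pairStartsBlock P y ⊆ C := by
  unfold pairStartsBlock
  split_ifs with h1 h2
  · simp [Finset.insert_subset_iff, hy, hP.add_one_mem y h1]
  · simpa [Finset.insert_subset_iff, hy] using hP.subset h2
  · simpa using hy

lemma PairStarts.isAllowed [NeZero N] {A C P : Finset (ZMod N)} (hP : PairStarts A C P)
    (hne : C ≠ Finset.univ) : IsAllowed A C := by
  refine ⟨hne, C.image (pairStartsBlock P), ?_, ?_, ?_⟩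
  · intro T hT
    obtain ⟨y, hy, rfl⟩ := Finset.mem_image.1 hT
    unfold pairStartsBlock
    split_ifs with h1 h2
    · exact Or.inr ⟨y, fun h => hne (eq_univ_of_add_one_eq hy h), hP.notMem_A y h1, rfl⟩
    · refine Or.inr ⟨y - 1, fun h => hne (eq_univ_of_add_one_eq (hP.subset h2) h),
        hP.notMem_A _ h2, by rw [sub_add_cancel]⟩
    · exact Or.inl ⟨y, hP.mem_A y hy h1 h2, rfl⟩
  · intro T₁ h₁ T₂ h₂ hT
    obtain ⟨y₁, -, rfl⟩ := Finset.mem_image.1 h₁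
    obtain ⟨y₂, -, rfl⟩ := Finset.mem_image.1 h₂
    refine Finset.disjoint_left.2 fun x hx₁ hx₂ => hT ?_
    exact (hP.block_eq hx₁).symm.trans (hP.block_eq hx₂)
  · ext x
    simp only [Finset.mem_sup, Finset.mem_image, id, exists_exists_and_eq_and]
    exact ⟨fun ⟨y, hy, hx⟩ => hP.block_subset hy hx,
      fun hx => ⟨x, hx, mem_pairStartsBlock_self P x⟩⟩

end PairStarts

section Scan

variable {N : ℕ}

/-- `scan A C x s n`: in the partition of `C` read from `x` onwards, `x + n` is the right end of a
pair; `s` says whether `x` itself is one. -/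
def scan (A C : Finset (ZMod N)) (x : ZMod N) (s : Prop) : ℕ → Prop
  | 0 => s
  | n + 1 => x + n ∈ C ∧ ¬ scan A C x s n ∧ x + n ∉ A

def ScanClosed (A C : Finset (ZMod N)) (j : ZMod N) : Prop :=
  ∀ n : ℕ, scan A C j False n → j + n ∈ C

variable {A C : Finset (ZMod N)}

lemma scan_add (x : ZMod N) (s : Prop) (n m : ℕ) :
    scan A C x s (n + m) = scan A C (x + n) (scan A C x s n) m := by
  induction m with
  | zero => rfl
  | succ m ih => rw [← Nat.add_assoc, scan, scan, ih, Nat.cast_add, add_assoc]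

lemma scan_congr {C' : Finset (ZMod N)} {x : ZMod N} {s : Prop} {m : ℕ}
    (h : ∀ l < m, x + l ∈ C ↔ x + l ∈ C') : scan A C x s m ↔ scan A C' x s m := by
  induction m with
  | zero => rfl
  | succ m ih =>
    simp only [scan, h m m.lt_add_one, ih fun l hl => h l (hl.trans m.lt_add_one)]

lemma scan_true_iff {x : ZMod N} {m : ℕ} (hC : ∀ l < m, x + l ∈ C) :
    scan A C x True m ↔ (scan A C x False m ↔ ∃ l < m, x + l ∈ A) := by
  induction m with
  | zero => simp [scan]
  | succ m ih =>
    simp only [scan, hC m m.lt_add_one, true_and, Nat.exists_lt_succ_right,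
      ih fun l hl => hC l (hl.trans m.lt_add_one)]
    by_cases x + m ∈ A <;> by_cases scan A C x False m <;> simp_all

lemma PairStarts.scan_iff {P : Finset (ZMod N)} (hP : PairStarts A C P) {j : ZMod N}
    (hj : j ∉ C) (n : ℕ) : scan A C j False n ↔ j + n - 1 ∈ P := by
  induction n with
  | zero => simpa [scan] using fun h => hj (by simpa using hP.add_one_mem _ h)
  | succ n ih =>
    rw [scan, ih, Nat.cast_add_one, ← add_assoc, add_sub_cancel_right]
    refine ⟨fun ⟨hC, hP₁, hA⟩ => ?_, fun h => ⟨hP.subset h, ?_, hP.notMem_A _ h⟩⟩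
    · by_contra h
      exact hA (hP.mem_A _ hC h hP₁)
    · exact fun h' => hP.add_one_notMem _ h' (by rwa [sub_add_cancel])

lemma PairStarts.scanClosed {P : Finset (ZMod N)} (hP : PairStarts A C P) {j : ZMod N}
    (hj : j ∉ C) : ScanClosed A C j := fun n h => by
  simpa using hP.add_one_mem _ ((hP.scan_iff hj n).1 h)

lemma scan_val_add_one [NeZero N] {j x : ZMod N} {s : Prop} (hx : x + 1 ≠ j) :
    scan A C j s (x + 1 - j).val ↔ x ∈ C ∧ ¬ scan A C j s (x - j).val ∧ x ∉ A := by
  rw [add_sub_right_comm, val_add_one_of_ne (by rwa [← add_sub_right_comm, sub_ne_zero]), scan,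
    ZMod.natCast_zmod_val, add_sub_cancel]

lemma ScanClosed.pairStarts [NeZero N] {j : ZMod N} (h : ScanClosed A C j) (hj : j ∉ C) :
    PairStarts A C (C.filter fun x => x ∉ A ∧ ¬ scan A C j False (x - j).val) := by
  have hC : ∀ {x : ZMod N}, x + 1 ∈ C → x + 1 ≠ j := fun h₁ h => hj (h ▸ h₁)
  refine ⟨Finset.filter_subset _ _, fun k hk => (Finset.mem_filter.1 hk).2.1, ?_, ?_, ?_⟩
  · intro k hk
    obtain ⟨hkC, hkA, hks⟩ := Finset.mem_filter.1 hk
    have := h _ (show scan A C j False ((k - j).val + 1) by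
      rw [scan, ZMod.natCast_zmod_val, add_sub_cancel]
      exact ⟨hkC, hks, hkA⟩)
    rwa [Nat.cast_add_one, ZMod.natCast_zmod_val, ← add_assoc, add_sub_cancel] at this
  · intro k hk hk₁
    obtain ⟨hkC, hkA, hks⟩ := Finset.mem_filter.1 hk
    obtain ⟨hk₁C, -, hk₁s⟩ := Finset.mem_filter.1 hk₁
    exact hk₁s ((scan_val_add_one (hC hk₁C)).2 ⟨hkC, hks, hkA⟩)
  · intro x hx hxP hx₁P
    by_contra hxA
    have hxs : scan A C j False (x - 1 + 1 - j).val := by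
      simpa [hx, hxA] using hxP
    rw [scan_val_add_one (by rw [sub_add_cancel]; exact fun h => hj (h ▸ hx))] at hxs
    exact hx₁P (Finset.mem_filter.2 ⟨hxs.1, hxs.2.2, hxs.2.1⟩)

theorem isAllowed_iff_exists_scanClosed [NeZero N] :
    IsAllowed A C ↔ ∃ j ∉ C, ScanClosed A C j := by
  refine ⟨fun h => ?_, fun ⟨j, hj, h⟩ =>
    (h.pairStarts hj).isAllowed fun hC => hj (hC ▸ Finset.mem_univ j)⟩
  obtain ⟨j, hj⟩ : ∃ j, j ∉ C := by simpa [Finset.eq_univ_iff_forall] using h.1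
  obtain ⟨P, hP⟩ := exists_pairStarts h
  exact ⟨j, hj, hP.scanClosed hj⟩

theorem _root_.IsAllowed.scanClosed [NeZero N] (h : IsAllowed A C) {j : ZMod N} (hj : j ∉ C) :
    ScanClosed A C j :=
  (exists_pairStarts h).choose_spec.scanClosed hj

end Scan

section Runs

variable {N : ℕ} [NeZero N] {B : Finset (ZMod N)}

lemma exists_add_notMem (hB : B ≠ Finset.univ) (x : ZMod N) :
    ∃ t : ℕ, 0 < t ∧ x + t ∉ B := by
  obtain ⟨y, hy⟩ : ∃ y, y ∉ B := by simpa [Finset.eq_univ_iff_forall] using hB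
  refine ⟨N + (y - x).val, by have := NeZero.pos N; omega, ?_⟩
  rwa [Nat.cast_add, ZMod.natCast_self, zero_add, ZMod.natCast_zmod_val, add_sub_cancel]

noncomputable def nextDist (hB : B ≠ Finset.univ) (x : ZMod N) : ℕ :=
  Nat.find (exists_add_notMem hB x)

variable (hB : B ≠ Finset.univ)

lemma nextDist_pos (x : ZMod N) : 0 < nextDist hB x :=
  (Nat.find_spec (exists_add_notMem hB x)).1

lemma add_nextDist_notMem (x : ZMod N) : x + nextDist hB x ∉ B :=
  (Nat.find_spec (exists_add_notMem hB x)).2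

lemma add_mem_of_lt_nextDist {x : ZMod N} {l : ℕ} (hl : 0 < l) (hlt : l < nextDist hB x) :
    x + l ∈ B := by
  by_contra h
  exact Nat.find_min (exists_add_notMem hB x) hlt ⟨hl, h⟩

lemma isSpring_iff {A : Finset (ZMod N)} {x : ZMod N} (hx : x ∉ B) :
    IsSpring A B x ↔ ∃ l, 1 + l < nextDist hB x ∧ x + 1 + l ∈ A := by
  have hcast : ∀ l : ℕ, x + ((1 + l : ℕ) : ZMod N) = x + 1 + l := fun l => by push_cast; ring
  refine ⟨fun ⟨_, k, hk, hkB, hkA⟩ => ?_,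
    fun ⟨l, hl, hlA⟩ => ⟨hx, 1 + l, by omega, ?_, ?_⟩⟩
  · obtain ⟨l, rfl⟩ : ∃ l, k = 1 + l := ⟨k - 1, by omega⟩
    refine ⟨l, lt_of_not_ge fun h => add_nextDist_notMem hB x ?_, by rwa [← hcast]⟩
    exact hkB _ (nextDist_pos hB x) h
  · exact fun m hm hml => add_mem_of_lt_nextDist hB hm (by omega)
  · rwa [hcast]

lemma scan_nextDist {A C : Finset (ZMod N)} {x : ZMod N} (hBA : IsAllowed A B) (hx : x ∉ B)
    (hC : B ⊆ C) (s : Prop) :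
    scan A C x s (nextDist hBA.1 x) ↔ x ∈ C ∧ ¬ s ∧ x ∉ A ∧ ¬ IsSpring A B x := by
  obtain ⟨m, hm⟩ : ∃ m, nextDist hBA.1 x = 1 + m :=
    ⟨nextDist hBA.1 x - 1, by have := nextDist_pos hBA.1 x; omega⟩
  have hblock : ∀ l < m, x + 1 + l ∈ B := fun l hl => by
    simpa [add_assoc] using add_mem_of_lt_nextDist hBA.1 (l := 1 + l) (by omega) (by omega)
  have hscan_one : ∀ C' s', scan A C' x s' 1 ↔ x ∈ C' ∧ ¬ s' ∧ x ∉ A := fun _ _ => by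
    simp [scan]
  have hCB : ∀ t, scan A C (x + 1) t m ↔ scan A B (x + 1) t m := fun t =>
    scan_congr fun l hl => iff_of_true (hC (hblock l hl)) (hblock l hl)
  -- The run after `x` is read as in `B`, and reading `B` from `x ∉ B` ends outside a pair.
  have hexit : ¬ scan A B (x + 1) False m := by
    intro h
    refine add_nextDist_notMem hBA.1 x (hm ▸ hBA.scanClosed hx (1 + m) ?_)
    rwa [scan_add, Nat.cast_one, eq_false fun h => hx ((hscan_one B False).1 h).1]
  rw [hm, scan_add, Nat.cast_one]
  by_cases hE : scan A C x s 1
  · rw [eq_true hE, hCB, scan_true_iff hblock, isSpring_iff hBA.1 hx, hm]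
    simp [hexit, (hscan_one C s).1 hE]
  · rw [eq_false hE, hCB]
    exact iff_of_false hexit fun h => hE ((hscan_one C s).2 ⟨h.1, h.2.1, h.2.2.1⟩)

/-- `j + orbitOffset hB j i` is the image of `j` under the `i`-th power of the cyclic action
on `Bᶜ`. -/
noncomputable def orbitOffset (j : ZMod N) : ℕ → ℕ
  | 0 => 0
  | i + 1 => orbitOffset j i + nextDist hB (j + orbitOffset j i)

lemma add_orbitOffset_notMem {j : ZMod N} (hj : j ∉ B) (i : ℕ) :
    j + orbitOffset hB j i ∉ B := by
  induction i with
  | zero => simpa [orbitOffset] using hj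
  | succ i ih =>
    simpa [orbitOffset, add_assoc] using add_nextDist_notMem hB (j + orbitOffset hB j i)

lemma map_add_orbitOffset {N' : ℕ} {φ : ZMod N → ZMod N'}
    (hφ : ∀ x ∉ B, φ (x + nextDist hB x) = φ x + 1) {j : ZMod N} (hj : j ∉ B) (i : ℕ) :
    φ (j + orbitOffset hB j i) = φ j + i := by
  induction i with
  | zero => simp [orbitOffset]
  | succ i ih =>
    rw [orbitOffset, Nat.cast_add, ← add_assoc, hφ _ (add_orbitOffset_notMem hB hj i), ih]
    push_cast
    ring

lemma exists_orbitOffset_le_lt (j : ZMod N) (n : ℕ) :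
    ∃ i, orbitOffset hB j i ≤ n ∧ n < orbitOffset hB j (i + 1) := by
  induction n with
  | zero => exact ⟨0, le_rfl, by simpa [orbitOffset] using nextDist_pos hB j⟩
  | succ n ih =>
    obtain ⟨i, hi, hn⟩ := ih
    rcases (Nat.succ_le_of_lt hn).lt_or_eq with hn | hn
    · exact ⟨i, by omega, hn⟩
    · refine ⟨i + 1, hn.ge, ?_⟩
      have := nextDist_pos hB (j + orbitOffset hB j (i + 1))
      change n + 1 < orbitOffset hB j (i + 1) + nextDist hB (j + orbitOffset hB j (i + 1))
      omega

end Runs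

section Transfer

variable {N N' : ℕ} [NeZero N] {A B D : Finset (ZMod N)} {φ : ZMod N → ZMod N'}
  {A' D' : Finset (ZMod N')}

lemma scan_orbitOffset_iff (hB : IsAllowed A B)
    (hφ : ∀ x ∉ B, φ (x + nextDist hB.1 x) = φ x + 1)
    (hA' : ∀ x ∉ B, φ x ∈ A' ↔ x ∈ A ∨ IsSpring A B x)
    (hD' : ∀ x ∉ B, φ x ∈ D' ↔ x ∈ D)
    {j : ZMod N} (hj : j ∉ B) (i : ℕ) :
    scan A (B ∪ D) j False (orbitOffset hB.1 j i) ↔ scan A' D' (φ j) False i := by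
  induction i with
  | zero => rfl
  | succ i ih =>
    have hz := add_orbitOffset_notMem hB.1 hj i
    rw [orbitOffset, scan_add, scan_nextDist hB hz Finset.subset_union_left, ih, scan,
      ← map_add_orbitOffset hB.1 hφ hj i, hD' _ hz, hA' _ hz, Finset.mem_union]
    simp only [hz, false_or, not_or]

lemma scanClosed_union_iff (hB : IsAllowed A B)
    (hφ : ∀ x ∉ B, φ (x + nextDist hB.1 x) = φ x + 1)
    (hA' : ∀ x ∉ B, φ x ∈ A' ↔ x ∈ A ∨ IsSpring A B x)
    (hD' : ∀ x ∉ B, φ x ∈ D' ↔ x ∈ D)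
    {j : ZMod N} (hj : j ∉ B) : ScanClosed A (B ∪ D) j ↔ ScanClosed A' D' (φ j) := by
  have hsim := scan_orbitOffset_iff hB hφ hA' hD' hj
  have hmem : ∀ i : ℕ, φ j + i ∈ D' ↔ j + orbitOffset hB.1 j i ∈ B ∪ D := fun i => by
    rw [← map_add_orbitOffset hB.1 hφ hj, hD' _ (add_orbitOffset_notMem hB.1 hj i),
      Finset.mem_union, or_iff_right (add_orbitOffset_notMem hB.1 hj i)]
  refine ⟨fun h i hi => (hmem i).2 (h _ ((hsim i).2 hi)), fun h n hn => ?_⟩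
  obtain ⟨i, hin, hni⟩ := exists_orbitOffset_le_lt hB.1 j n
  rcases hin.eq_or_lt with rfl | hin
  · exact (hmem i).1 (h i ((hsim i).1 hn))
  · refine Finset.mem_union_left _ ?_
    have := add_mem_of_lt_nextDist hB.1 (x := j + orbitOffset hB.1 j i)
      (l := n - orbitOffset hB.1 j i) (by omega) (by rw [orbitOffset] at hni; omega)
    rwa [add_assoc, ← Nat.cast_add, Nat.add_sub_cancel' hin.le] at this

lemma isAllowed_union_iff [NeZero N'] (hB : IsAllowed A B)
    (hφ : ∀ x ∉ B, φ (x + nextDist hB.1 x) = φ x + 1) (hsurj : ∀ y, ∃ x ∉ B, φ x = y)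
    (hA' : ∀ x ∉ B, φ x ∈ A' ↔ x ∈ A ∨ IsSpring A B x)
    (hD' : ∀ x ∉ B, φ x ∈ D' ↔ x ∈ D) : IsAllowed A (B ∪ D) ↔ IsAllowed A' D' := by
  simp only [isAllowed_iff_exists_scanClosed]
  constructor
  · rintro ⟨j, hj, h⟩
    rw [Finset.mem_union, not_or] at hj
    exact ⟨φ j, (hD' j hj.1).not.2 hj.2, (scanClosed_union_iff hB hφ hA' hD' hj.1).1 h⟩
  · rintro ⟨j', hj', h⟩
    obtain ⟨j, hj, rfl⟩ := hsurj j'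
    refine ⟨j, ?_, (scanClosed_union_iff hB hφ hA' hD' hj).2 h⟩
    rw [Finset.mem_union, not_or]
    exact ⟨hj, (hD' j hj).not.1 hj'⟩

end Transfer

end Allowed

open Allowed

theorem allowed_subsets_containing_bijection_general
    (N N' : ℕ) [NeZero N] [NeZero N'] (A B : Finset (ZMod N))
    (hB : IsAllowed A B)
    (φ : ZMod N → ZMod N')
    (hbij : Set.BijOn φ (Bᶜ : Finset (ZMod N)) Set.univ)
    (hcompat : ∀ x ∈ Bᶜ, ∀ j : ℕ, 1 ≤ j → x + (j : ZMod N) ∈ Bᶜ →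
      (∀ l : ℕ, 1 ≤ l → l < j → x + (l : ZMod N) ∉ Bᶜ) →
      φ (x + (j : ZMod N)) = φ x + 1)
    (A' : Finset (ZMod N'))
    (hA' : A' = (A ∩ Bᶜ).image φ ∪ (Bᶜ.filter (IsSpring A B)).image φ) :
    Set.BijOn (fun C : Finset (ZMod N) => (C ∩ Bᶜ).image φ)
      {C : Finset (ZMod N) | IsAllowed A C ∧ B ⊆ C}
      {C' : Finset (ZMod N') | IsAllowed A' C'} := by
  have hφ : ∀ x ∉ B, φ (x + nextDist hB.1 x) = φ x + 1 := fun x hx =>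
    hcompat x (Finset.mem_compl.2 hx) _ (nextDist_pos hB.1 x)
      (Finset.mem_compl.2 (add_nextDist_notMem hB.1 x))
      fun l hl hlt h => Finset.mem_compl.1 h (add_mem_of_lt_nextDist hB.1 hl hlt)
  have hsurj : ∀ y, ∃ x ∉ B, φ x = y := fun y => by simpa using hbij.surjOn (Set.mem_univ y)
  have hmem : ∀ {D}, D ⊆ Bᶜ → ∀ x ∉ B, φ x ∈ D.image φ ↔ x ∈ D := fun hD x hx =>
    mem_image_iff_of_injOn hbij.injOn hD (Finset.mem_compl.2 hx)
  have hspring : ∀ x ∉ B, φ x ∈ A' ↔ x ∈ A ∨ IsSpring A B x := fun x hx => by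
    rw [hA', Finset.mem_union, hmem Finset.inter_subset_right x hx,
      hmem (Finset.filter_subset _ _) x hx]
    simp [hx]
  have hiff : ∀ C, B ⊆ C → (IsAllowed A C ↔ IsAllowed A' ((C ∩ Bᶜ).image φ)) := by
    intro C hC
    conv_lhs => rw [← Finset.union_sdiff_of_subset hC, Finset.sdiff_eq_inter_compl]
    exact isAllowed_union_iff hB hφ hsurj hspring (hmem Finset.inter_subset_right)
  have hbij' := bijOn_image_inter_compl hbij
  refine ⟨fun C hC => (hiff C hC.2).1 hC.1, hbij'.injOn.mono fun C hC => hC.2, fun C' hC' => ?_⟩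
  obtain ⟨C, hC, rfl⟩ := hbij'.surjOn (Set.mem_univ C')
  exact ⟨C, ⟨(hiff C hC).2 hC', hC⟩, rfl⟩

/-- Let `A ⊆ ℤ/Nℤ`, `B` an allowed subset relative to `A` with
complement `B'` of cardinality `N'`, and `φ : B' → ℤ/N'ℤ` a bijection compatible with
the induced cyclic actions.  With `A' = φ(A ∩ B') ∪ φ(S_B)` (`S_B` the set of springs
of `B`), the map `C ↦ φ(C ∩ B')` is a bijection from `{C ∈ 𝒫_A : B ⊆ C}` onto
`𝒫_{A'}`. -/
theorem allowed_subsets_containing_bijection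
    (N N' : ℕ) [NeZero N] [NeZero N'] (A B : Finset (ZMod N))
    (hB : IsAllowed A B) (hN' : N' = Bᶜ.card)
    (φ : ZMod N → ZMod N')
    (hbij : Set.BijOn φ (Bᶜ : Finset (ZMod N)) Set.univ)
    (hcompat : ∀ x ∈ Bᶜ, ∀ j : ℕ, 1 ≤ j → x + (j : ZMod N) ∈ Bᶜ →
      (∀ l : ℕ, 1 ≤ l → l < j → x + (l : ZMod N) ∉ Bᶜ) →
      φ (x + (j : ZMod N)) = φ x + 1)
    (A' : Finset (ZMod N'))
    (hA' : A' = (A ∩ Bᶜ).image φ ∪ (Bᶜ.filter (IsSpring A B)).image φ) :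
    Set.BijOn (fun C : Finset (ZMod N) => (C ∩ Bᶜ).image φ)
      {C : Finset (ZMod N) | IsAllowed A C ∧ B ⊆ C}
      {C' : Finset (ZMod N') | IsAllowed A' C'} :=
  allowed_subsets_containing_bijection_general N N' A B hB φ hbij hcompat A' hA'
end

section
/- For N ≥ 3 and any A ⊆ ℤ/Nℤ, the polynomial P_A is irreducible in ℤ[X₀,…,X_{N−1}]. -/
set_option linter.unusedSectionVars false
set_option maxHeartbeats 1000000

open scoped Classical
open MvPolynomial

lemma degreeOf_mul_eq' {σ : Type*} [Fintype σ] (i : σ)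
    {f g : MvPolynomial σ ℤ} (hf : f ≠ 0) (hg : g ≠ 0) :
    degreeOf i (f * g) = degreeOf i f + degreeOf i g := by
  classical
  have hcard : 0 < Fintype.card σ := Fintype.card_pos_iff.mpr ⟨i⟩
  obtain ⟨n, hn⟩ : ∃ n, Fintype.card σ = n + 1 :=
    ⟨Fintype.card σ - 1, (Nat.succ_pred_eq_of_pos hcard).symm⟩
  let e0 : σ ≃ Fin (n + 1) := Fintype.equivFinOfCardEq hn
  let e : σ ≃ Fin (n + 1) := e0.trans (Equiv.swap (e0 i) 0)
  have hei : e i = 0 := by simp [e, Equiv.swap_apply_left]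
  have hrinj : Function.Injective (e : σ → Fin (n + 1)) := e.injective
  have hdeg : ∀ p : MvPolynomial σ ℤ, degreeOf i p = degreeOf 0 (rename (⇑e) p) := by
    intro p
    rw [← hei, degreeOf_rename_of_injective hrinj]
  have hmul : rename (⇑e) (f * g) = rename (⇑e) f * rename (⇑e) g :=
    map_mul (rename (⇑e)) f g
  rw [hdeg, hdeg, hdeg, hmul]
  have hrf : rename (⇑e) f ≠ 0 := fun h =>
    hf (rename_injective (⇑e) hrinj (by rw [h, map_zero]))
  have hrg : rename (⇑e) g ≠ 0 := fun h =>
    hg (rename_injective (⇑e) hrinj (by rw [h, map_zero]))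
  have hmul2 : finSuccEquiv ℤ n (rename (⇑e) f * rename (⇑e) g)
      = finSuccEquiv ℤ n (rename (⇑e) f) * finSuccEquiv ℤ n (rename (⇑e) g) :=
    map_mul _ _ _
  rw [← natDegree_finSuccEquiv, ← natDegree_finSuccEquiv, ← natDegree_finSuccEquiv,
    hmul2]
  apply Polynomial.natDegree_mul
  · intro h
    exact hrf ((finSuccEquiv ℤ n).injective (by rw [h, map_zero]))
  · intro h
    exact hrg ((finSuccEquiv ℤ n).injective (by rw [h, map_zero]))


namespace PolyPAux
variable {N : ℕ} [NeZero N] {A : Finset (ZMod N)}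

lemma self_ne_add_one (hN : 3 ≤ N) (k : ZMod N) : k ≠ k + 1 := by
  intro h
  have h1 : (0 : ZMod N) = 1 := by
    have := congrArg (fun x => x - k) h
    simpa using this
  have h2 : ((1 : ℕ) : ZMod N) = 0 := by push_cast; exact h1.symm
  rw [ZMod.natCast_eq_zero_iff] at h2
  have := Nat.le_of_dvd Nat.one_pos h2
  omega

lemma card_univ_zmod : (Finset.univ : Finset (ZMod N)).card = N := by
  rw [Finset.card_univ, ZMod.card]

lemma ne_univ_of_card_lt {B : Finset (ZMod N)} (h : B.card < N) :
    B ≠ Finset.univ := by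
  intro hEq
  rw [hEq, card_univ_zmod] at h
  omega

lemma isAllowed_pair (hN : 3 ≤ N) {k : ZMod N} (hk : k ∉ A) :
    IsAllowed A ({k, k + 1} : Finset (ZMod N)) := by
  have hne := self_ne_add_one hN k
  refine ⟨ne_univ_of_card_lt ?_, {({k, k+1} : Finset (ZMod N))}, ?_, ?_, ?_⟩
  · calc ({k, k+1} : Finset (ZMod N)).card ≤ 2 := Finset.card_insert_le _ _ |>.trans (by simp)
    _ < 3 := by omega
    _ ≤ N := hN
  · intro C hC
    rw [Finset.mem_singleton] at hC
    exact Or.inr ⟨k, hne, hk, hC⟩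
  · simp
  · simp

lemma isAllowed_singleton (hN : 3 ≤ N) {a : ZMod N} (ha : a ∈ A) :
    IsAllowed A ({a} : Finset (ZMod N)) := by
  refine ⟨ne_univ_of_card_lt ?_, {({a} : Finset (ZMod N))}, ?_, ?_, ?_⟩
  · simp; omega
  · intro C hC
    rw [Finset.mem_singleton] at hC
    exact Or.inl ⟨a, ha, hC⟩
  · simp
  · simp

lemma mem_of_isAllowed_singleton {k : ZMod N}
    (h : IsAllowed A ({k} : Finset (ZMod N))) : k ∈ A := by
  obtain ⟨-, 𝒞, hgen, -, hsup⟩ := h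
  have hk : k ∈ 𝒞.sup id := by rw [hsup]; exact Finset.mem_singleton_self k
  rw [Finset.mem_sup] at hk
  obtain ⟨C, hC, hkC⟩ := hk
  have hCsub : C ⊆ {k} := by
    have := Finset.le_sup (f := id) hC
    rw [hsup] at this
    exact this
  rcases hgen C hC with ⟨a, ha, rfl⟩ | ⟨k', hne, -, rfl⟩
  · have hak : k = a := by simpa using hkC
    rwa [hak]
  · exfalso
    have h1 : k' = k := by
      have : k' ∈ ({k} : Finset (ZMod N)) := hCsub (by simp)
      simpa using this
    have h2 : k' + 1 = k := by
      have : k' + 1 ∈ ({k} : Finset (ZMod N)) := hCsub (by simp)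
      simpa using this
    rw [h1] at hne h2
    exact hne h2.symm

lemma not_isAllowed_univ : ¬ IsAllowed A (Finset.univ : Finset (ZMod N)) :=
  fun h => h.1 rfl

def Partitionable (A B : Finset (ZMod N)) : Prop :=
  ∃ 𝒞 : Finset (Finset (ZMod N)), (∀ C ∈ 𝒞, GenAllowed A C) ∧
    (𝒞 : Set (Finset (ZMod N))).PairwiseDisjoint id ∧ 𝒞.sup id = B

lemma cast_eq_cast_nat {n j : ℕ} (hn : n < N) (hj : j < N)
    (h : (n : ZMod N) = (j : ZMod N)) : n = j := by
  have := congrArg ZMod.val h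
  rwa [ZMod.val_cast_of_lt hn, ZMod.val_cast_of_lt hj] at this

lemma sub_cast_eq {a : ZMod N} {n j : ℕ} (hn : n < N) (hj : j < N)
    (h : a - (n : ZMod N) = a - (j : ZMod N)) : n = j := by
  apply cast_eq_cast_nat hn hj
  exact sub_right_inj.mp h

lemma partitionable_run (hN : 3 ≤ N) {a : ZMod N} (ha : a ∈ A) :
    ∀ L : ℕ, L ≤ N → (∀ j : ℕ, 1 ≤ j → j < L → a - (j : ZMod N) ∉ A) →
    Partitionable A ((Finset.range L).image (fun j : ℕ => a - (j : ZMod N))) := by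
  intro L
  induction L using Nat.strong_induction_on with
  | _ L IH =>
    obtain _ | _ | n := L
    · intro _ _
      exact ⟨∅, by simp, by simp, by simp⟩
    · intro _ _
      refine ⟨{({a} : Finset (ZMod N))}, ?_, by simp, by simp⟩
      intro C hC
      rw [Finset.mem_singleton] at hC
      exact Or.inl ⟨a, ha, hC⟩
    · intro hL hmin
      obtain ⟨𝒞', hgen', hdisj', hsup'⟩ :=
        IH n (by omega) (by omega)
          (fun j h1 h2 => hmin j h1 (by omega))
      set f : ℕ → ZMod N := fun j => a - (j : ZMod N) with hf
      set k : ZMod N := f (n+1) with hk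
      have hk1 : k + 1 = f n := by
        simp only [hk, hf]
        push_cast
        ring
      have hkA : k ∉ A := hmin (n+1) (by omega) (by omega)
      have hDgen : GenAllowed A ({k, k+1} : Finset (ZMod N)) :=
        Or.inr ⟨k, self_ne_add_one hN k, hkA, rfl⟩
      have hnotin : ∀ x ∈ ({k, k+1} : Finset (ZMod N)),
          x ∉ (Finset.range n).image f := by
        intro x hx hmem
        rw [Finset.mem_image] at hmem
        obtain ⟨j, hj, hjx⟩ := hmem
        rw [Finset.mem_range] at hj
        rcases Finset.mem_insert.mp hx with rfl | hx1
        · have := sub_cast_eq (N := N) (by omega) (by omega) hjx.symm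
          omega
        · rw [Finset.mem_singleton] at hx1
          subst hx1
          rw [hk1] at hjx
          have := sub_cast_eq (N := N) (by omega) (by omega) hjx.symm
          omega
      refine ⟨insert ({k, k+1} : Finset (ZMod N)) 𝒞', ?_, ?_, ?_⟩
      · intro C hC
        rcases Finset.mem_insert.mp hC with rfl | hC'
        · exact hDgen
        · exact hgen' C hC'
      · rw [Finset.coe_insert]
        apply hdisj'.insert
        intro C hC _
        rw [Finset.disjoint_left]
        intro x hx hxC
        have hCsub : C ⊆ (Finset.range n).image f := by
          have := Finset.le_sup (f := id) hC
          rwa [hsup'] at this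
        exact hnotin x hx (hCsub hxC)
      · rw [Finset.sup_insert, hsup']
        ext x
        simp only [Finset.sup_eq_union, Finset.mem_union, Finset.mem_image,
          Finset.mem_range, id]
        constructor
        · rintro (hx | ⟨j, hj, rfl⟩)
          · rcases Finset.mem_insert.mp hx with rfl | hx1
            · exact ⟨n+1, by omega, rfl⟩
            · rw [Finset.mem_singleton] at hx1
              subst hx1
              exact ⟨n, by omega, hk1.symm⟩
          · exact ⟨j, by omega, rfl⟩
        · rintro ⟨j, hj, rfl⟩
          by_cases hjn : j < n
          · exact Or.inr ⟨j, hjn, rfl⟩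
          · left
            rcases (by omega : j = n ∨ j = n + 1) with rfl | rfl
            · rw [← hk1]; simp
            · exact Finset.mem_insert_self _ _

lemma partitionable_closed (hN : 3 ≤ N) {I : Finset (ZMod N)}
    (hA : A.Nonempty)
    (hcl : ∀ k : ZMod N, k ∉ A → (k ∈ I ↔ k + 1 ∈ I)) :
    Partitionable A I := by
  classical
  have hNpos : 0 < N := Nat.pos_of_ne_zero (NeZero.ne N)
  -- minimal positive distance back to A
  have key : ∀ a : ZMod N, a ∈ A → ∃ d : ℕ, (0 < d ∧ a - (d : ZMod N) ∈ A) ∧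
      d ≤ N ∧ (∀ j : ℕ, 1 ≤ j → j < d → a - (j : ZMod N) ∉ A) := by
    intro a ha
    have hex : ∃ j : ℕ, 0 < j ∧ a - (j : ZMod N) ∈ A :=
      ⟨N, hNpos, by rw [ZMod.natCast_self, sub_zero]; exact ha⟩
    refine ⟨Nat.find hex, Nat.find_spec hex, ?_, ?_⟩
    · exact Nat.find_le ⟨hNpos, by rw [ZMod.natCast_self, sub_zero]; exact ha⟩
    · intro j h1 h2
      intro hmem
      exact Nat.find_min hex h2 ⟨h1, hmem⟩
  choose! dfun hd using key
  set C : ZMod N → Finset (ZMod N) :=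
    fun a => (Finset.range (dfun a)).image (fun j : ℕ => a - (j : ZMod N)) with hC
  -- disjointness of components
  have aux : ∀ a ∈ A, ∀ a' ∈ A, ∀ i i' : ℕ, i < dfun a → i' < dfun a' → i ≤ i' →
      a - (i : ZMod N) = a' - (i' : ZMod N) → a = a' := by
    intro a ha a' ha' i i' hi hi' hii' heq
    have hcast : a = a' - (((i' - i : ℕ)) : ZMod N) := by
      rw [Nat.cast_sub hii']
      linear_combination heq
    rcases Nat.eq_zero_or_pos (i' - i) with h0 | hpos
    · rw [h0] at hcast
      simpa using hcast
    · exfalso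
      have := (hd a' ha').2.2 (i' - i) hpos (by omega)
      rw [← hcast] at this
      exact this ha
  have hdisj : ∀ a ∈ A, ∀ a' ∈ A, a ≠ a' → Disjoint (C a) (C a') := by
    intro a ha a' ha' hne
    rw [Finset.disjoint_left]
    intro x hx hx'
    simp only [hC, Finset.mem_image, Finset.mem_range] at hx hx'
    obtain ⟨i, hi, rfl⟩ := hx
    obtain ⟨i', hi', heq⟩ := hx'
    rcases le_total i i' with h | h
    · exact hne (aux a ha a' ha' i i' hi hi' h heq.symm)
    · exact hne (aux a' ha' a ha i' i hi' hi h heq).symm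
  -- components inside I
  have subI : ∀ a ∈ A, a ∈ I → C a ⊆ I := by
    intro a ha haI
    have : ∀ j : ℕ, j < dfun a → a - (j : ZMod N) ∈ I := by
      intro j
      induction j with
      | zero => intro _; simpa using haI
      | succ j IH =>
          intro hlt
          have hIH := IH (by omega)
          have hnA : a - ((j+1 : ℕ) : ZMod N) ∉ A :=
            (hd a ha).2.2 (j+1) (by omega) hlt
          have harith : a - ((j+1 : ℕ) : ZMod N) + 1 = a - (j : ZMod N) := by
            push_cast; ring
          exact (hcl _ hnA).mpr (by rw [harith]; exact hIH)
    intro x hx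
    simp only [hC, Finset.mem_image, Finset.mem_range] at hx
    obtain ⟨j, hj, rfl⟩ := hx
    exact this j hj
  -- forward walk in I
  have fwd : ∀ x, x ∈ I → ∀ j : ℕ, (∀ i : ℕ, i < j → x + (i : ZMod N) ∉ A) →
      x + (j : ZMod N) ∈ I := by
    intro x hx j
    induction j with
    | zero => intro _; simpa using hx
    | succ j IH =>
        intro h
        have hIH := IH (fun i hi => h i (by omega))
        have hnA : x + (j : ZMod N) ∉ A := h j (by omega)
        have harith : x + (j : ZMod N) + 1 = x + ((j+1 : ℕ) : ZMod N) := by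
          push_cast; ring
        rw [← harith]
        exact (hcl _ hnA).mp hIH
  -- every element of I is covered by a component with head in A ∩ I
  have cover : ∀ x ∈ I, ∃ a, a ∈ A ∧ a ∈ I ∧ x ∈ C a := by
    intro x hx
    obtain ⟨b, hb⟩ := hA
    have hexj : ∃ j : ℕ, x + (j : ZMod N) ∈ A :=
      ⟨(b - x).val, by rw [ZMod.natCast_rightInverse (b - x)]; simpa using hb⟩
    set j := Nat.find hexj with hj
    set a := x + (j : ZMod N) with hadef
    have ha : a ∈ A := Nat.find_spec hexj
    have hmin : ∀ i : ℕ, i < j → x + (i : ZMod N) ∉ A := fun i hi => Nat.find_min hexj hi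
    have haI : a ∈ I := fwd x hx j hmin
    have hjd : j < dfun a := by
      by_contra hcon
      push_neg at hcon
      have h0 : 0 < dfun a := (hd a ha).1.1
      have hmem : a - ((dfun a : ℕ) : ZMod N) ∈ A := (hd a ha).1.2
      have harith : a - ((dfun a : ℕ) : ZMod N) = x + (((j - dfun a : ℕ)) : ZMod N) := by
        rw [Nat.cast_sub hcon, hadef]
        ring
      rw [harith] at hmem
      exact hmin (j - dfun a) (by omega) hmem
    refine ⟨a, ha, haI, ?_⟩
    simp only [hC, Finset.mem_image, Finset.mem_range]
    exact ⟨j, hjd, by rw [hadef]; ring⟩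
  -- partitions of the components
  have hpart : ∀ a : ZMod N, ∃ 𝒞a : Finset (Finset (ZMod N)), a ∈ A →
      ((∀ D ∈ 𝒞a, GenAllowed A D) ∧
       (𝒞a : Set (Finset (ZMod N))).PairwiseDisjoint id ∧ 𝒞a.sup id = C a) := by
    intro a
    by_cases ha : a ∈ A
    · obtain ⟨𝒞a, h1, h2, h3⟩ :=
        partitionable_run hN ha (dfun a) (hd a ha).2.1 (hd a ha).2.2
      exact ⟨𝒞a, fun _ => ⟨h1, h2, h3⟩⟩
    · exact ⟨∅, fun h => absurd h ha⟩
  choose 𝒞F h𝒞F using hpart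
  refine ⟨(A ∩ I).biUnion 𝒞F, ?_, ?_, ?_⟩
  · intro D hD
    rw [Finset.mem_biUnion] at hD
    obtain ⟨a, haAI, hDa⟩ := hD
    exact ((h𝒞F a (Finset.mem_inter.mp haAI).1).1) D hDa
  · intro C₁ hC₁ C₂ hC₂ hne
    rw [Finset.mem_coe, Finset.mem_biUnion] at hC₁ hC₂
    obtain ⟨a₁, ha₁, hC₁'⟩ := hC₁
    obtain ⟨a₂, ha₂, hC₂'⟩ := hC₂
    have ha₁A := (Finset.mem_inter.mp ha₁).1
    have ha₂A := (Finset.mem_inter.mp ha₂).1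
    by_cases heq : a₁ = a₂
    · subst heq
      exact (h𝒞F a₁ ha₁A).2.1 (Finset.mem_coe.mpr hC₁') (Finset.mem_coe.mpr hC₂') hne
    · have hsub₁ : C₁ ⊆ C a₁ := by
        have := Finset.le_sup (f := id) hC₁'
        rwa [(h𝒞F a₁ ha₁A).2.2] at this
      have hsub₂ : C₂ ⊆ C a₂ := by
        have := Finset.le_sup (f := id) hC₂'
        rwa [(h𝒞F a₂ ha₂A).2.2] at this
      exact Finset.disjoint_of_subset_left hsub₁
        (Finset.disjoint_of_subset_right hsub₂ (hdisj a₁ ha₁A a₂ ha₂A heq))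
  · rw [Finset.sup_biUnion]
    apply le_antisymm
    · rw [Finset.sup_le_iff]
      intro a haAI
      rw [(h𝒞F a (Finset.mem_inter.mp haAI).1).2.2]
      intro x hx
      exact subI a (Finset.mem_inter.mp haAI).1 (Finset.mem_inter.mp haAI).2 hx
    · intro x hx
      obtain ⟨a, ha, haI, hxa⟩ := cover x hx
      have : x ∈ (𝒞F a).sup id := by
        rw [(h𝒞F a ha).2.2]; exact hxa
      rw [Finset.mem_sup] at this ⊢
      obtain ⟨D, hD, hxD⟩ := this
      refine ⟨a, Finset.mem_inter.mpr ⟨ha, haI⟩, ?_⟩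
      rw [Finset.mem_sup]
      exact ⟨D, hD, hxD⟩

lemma eq_univ_of_succ_closed {I : Finset (ZMod N)} (hne : I.Nonempty)
    (h : ∀ k ∈ I, k + 1 ∈ I) : I = Finset.univ := by
  obtain ⟨x, hx⟩ := hne
  have hall : ∀ j : ℕ, x + (j : ZMod N) ∈ I := by
    intro j
    induction j with
    | zero => simpa using hx
    | succ j IH =>
        have : x + (j : ZMod N) + 1 ∈ I := h _ IH
        have harith : x + (j : ZMod N) + 1 = x + ((j + 1 : ℕ) : ZMod N) := by
          push_cast; ring
        rwa [harith] at this
  apply Finset.eq_univ_of_forall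
  intro y
  have := hall (y - x).val
  rwa [ZMod.natCast_rightInverse (y - x), add_sub_cancel] at this




noncomputable def e (S : Finset (ZMod N)) : (ZMod N) →₀ ℕ :=
  ∑ i ∈ S, Finsupp.single i 1

lemma e_apply (S : Finset (ZMod N)) (i : ZMod N) :
    e S i = if i ∈ S then 1 else 0 := by
  classical
  rw [e, Finset.sum_apply']
  simp [Finsupp.single_apply]

lemma e_inj : Function.Injective (e (N := N)) := by
  intro S T h
  ext i
  have h2 := congrArg (fun m => m i) h
  simp only [e_apply] at h2
  by_cases hS : i ∈ S <;> by_cases hT : i ∈ T <;> simp_all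

lemma e_union (S T : Finset (ZMod N)) (h : Disjoint S T) :
    e (S ∪ T) = e S + e T := by
  rw [e, e, e, Finset.sum_union h]

lemma prod_X_eq (S : Finset (ZMod N)) :
    (∏ i ∈ S, (X i : MvPolynomial (ZMod N) ℤ)) = monomial (e S) 1 := by
  classical
  induction S using Finset.induction_on with
  | empty => simp [e]
  | insert a s hx ih =>
      rw [Finset.prod_insert hx, ih, X, monomial_mul, one_mul]
      congr 1
      rw [e, e, Finset.sum_insert hx]

lemma polyP_eq (A : Finset (ZMod N)) :
    polyP A = ∑ B ∈ Finset.univ.filter (fun B => IsAllowed A B),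
      monomial (e Bᶜ) (1 : ℤ) := by
  rw [polyP]
  exact Finset.sum_congr rfl fun B _ => prod_X_eq _

lemma coeff_polyP (A : Finset (ZMod N)) (U : Finset (ZMod N)) :
    coeff (e U) (polyP A) = if IsAllowed A Uᶜ then 1 else 0 := by
  classical
  rw [polyP_eq, coeff_sum]
  have : ∀ B ∈ Finset.univ.filter (fun B => IsAllowed A B),
      coeff (e U) (monomial (e Bᶜ) (1:ℤ)) = if B = Uᶜ then 1 else 0 := by
    intro B _
    rw [coeff_monomial]
    congr 1
    simp only [eq_iff_iff]
    constructor
    · intro h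
      have := e_inj h
      rw [← this, compl_compl]
    · intro h; rw [h, compl_compl]
  rw [Finset.sum_congr rfl this, Finset.sum_ite_eq' _ (Uᶜ)]
  simp

lemma exists_of_coeff_ne (A : Finset (ZMod N)) {m : (ZMod N) →₀ ℕ}
    (h : coeff m (polyP A) ≠ 0) : ∃ S, m = e S := by
  classical
  by_contra hc
  push_neg at hc
  apply h
  rw [polyP_eq, coeff_sum]
  apply Finset.sum_eq_zero
  intro B _
  rw [coeff_monomial, if_neg]
  intro hEq
  exact hc Bᶜ hEq.symm

lemma isAllowed_empty : IsAllowed A (∅ : Finset (ZMod N)) := by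
  refine ⟨?_, ∅, by simp, by simp, by simp⟩
  intro h
  have : (Finset.univ : Finset (ZMod N)).Nonempty := Finset.univ_nonempty
  rw [← h] at this
  exact Finset.not_nonempty_empty this

lemma coeff_top (A : Finset (ZMod N)) :
    coeff (e (Finset.univ : Finset (ZMod N))) (polyP A) = 1 := by
  rw [coeff_polyP, if_pos]
  rw [Finset.compl_univ]
  exact isAllowed_empty

lemma degreeOf_polyP (A : Finset (ZMod N)) (i : ZMod N) :
    degreeOf i (polyP A) = 1 := by
  classical
  apply le_antisymm
  · rw [degreeOf_eq_sup, Finset.sup_le_iff]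
    intro m hm
    obtain ⟨S, rfl⟩ := exists_of_coeff_ne A (by rwa [mem_support_iff] at hm)
    rw [e_apply]
    split <;> simp
  · have hmem : e (Finset.univ : Finset (ZMod N)) ∈ (polyP A).support := by
      rw [mem_support_iff, coeff_top]; exact one_ne_zero
    have := monomial_le_degreeOf i hmem
    rwa [e_apply, if_pos (Finset.mem_univ i)] at this

end PolyPAux
open PolyPAux in
/-- For `N ≥ 3` and any `A ⊆ ℤ/Nℤ`, the polynomial `P_A` is irreducible
in `ℤ[X₀,…,X_{N-1}]`. -/
theorem polyP_irreducible
    (N : ℕ) [NeZero N] (hN : 3 ≤ N) (A : Finset (ZMod N)) :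
    Irreducible (polyP A) := by
  classical
  have hPne : polyP A ≠ 0 := by
    intro h
    have := coeff_top A
    rw [h, coeff_zero] at this
    exact zero_ne_one this
  -- helper: a factor with all degrees zero is a unit
  have hconst : ∀ f g : MvPolynomial (ZMod N) ℤ, polyP A = f * g →
      (∀ i, degreeOf i f = 0) → IsUnit f := by
    intro f g hfg hdeg
    have hfc : f = C (coeff 0 f) := by
      apply MvPolynomial.ext
      intro m
      by_cases hm : m = 0
      · subst hm; rw [coeff_C, if_pos rfl]
      · rw [coeff_C, if_neg (Ne.symm hm)]
        by_contra hc
        have hmem : m ∈ f.support := mem_support_iff.mpr hc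
        apply hm
        ext i
        have := (monomial_le_degreeOf i hmem).trans (le_of_eq (hdeg i))
        simpa using this
    have h1 : (1 : ℤ) = coeff 0 f * coeff (e (Finset.univ : Finset (ZMod N))) g := by
      have := coeff_top A
      rw [hfg, hfc, coeff_C_mul] at this
      exact this.symm
    have : IsUnit (coeff 0 f) := IsUnit.of_mul_eq_one _ h1.symm
    rw [hfc]
    exact this.map C
  constructor
  · -- not a unit
    intro hu
    obtain ⟨v, hv⟩ := hu.exists_right_inv
    have hv0 : v ≠ 0 := by
      intro h; rw [h, mul_zero] at hv; exact one_ne_zero hv.symm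
    have hdeg := degreeOf_mul_eq' (0 : ZMod N) hPne hv0
    rw [hv, degreeOf_polyP] at hdeg
    have : degreeOf (0 : ZMod N) (1 : MvPolynomial (ZMod N) ℤ) = 0 := by
      rw [← C_1, degreeOf_C]
    omega
  · intro f g hfg
    by_contra hcon
    push_neg at hcon
    obtain ⟨hfu, hgu⟩ := hcon
    have hf0 : f ≠ 0 := by intro h; rw [h, zero_mul] at hfg; exact hPne hfg
    have hg0 : g ≠ 0 := by intro h; rw [h, mul_zero] at hfg; exact hPne hfg
    have hsum : ∀ i : ZMod N, degreeOf i f + degreeOf i g = 1 := by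
      intro i
      rw [← degreeOf_mul_eq' i hf0 hg0, ← hfg, degreeOf_polyP]
    set I : Finset (ZMod N) := Finset.univ.filter (fun i => degreeOf i f = 1) with hIdef
    set J : Finset (ZMod N) := Iᶜ with hJdef
    have hmemI : ∀ i : ZMod N, i ∈ I ↔ degreeOf i f = 1 := by
      intro i; rw [hIdef, Finset.mem_filter]; simp
    have hmemJ : ∀ i : ZMod N, i ∈ J ↔ i ∉ I := by
      intro i; rw [hJdef, Finset.mem_compl]
    have hJf : ∀ i ∈ J, degreeOf i f = 0 := by
      intro i hi
      have h1 := hsum i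
      have h2 : degreeOf i f ≠ 1 := fun h => (hmemJ i).mp hi ((hmemI i).mpr h)
      omega
    have hIg : ∀ i ∈ I, degreeOf i g = 0 := by
      intro i hi
      have h1 := hsum i
      have h2 : degreeOf i f = 1 := (hmemI i).mp hi
      omega
    have hsuppf : ∀ m ∈ f.support, ∀ i ∈ J, m i = 0 := by
      intro m hm i hi
      have := (monomial_le_degreeOf i hm).trans (le_of_eq (hJf i hi))
      omega
    have hsuppg : ∀ m ∈ g.support, ∀ i ∈ I, m i = 0 := by
      intro m hm i hi
      have := (monomial_le_degreeOf i hm).trans (le_of_eq (hIg i hi))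
      omega
    -- key coefficient factorization
    have keycoeff : ∀ U : Finset (ZMod N),
        coeff (e U) (polyP A) = coeff (e (U ∩ I)) f * coeff (e (U ∩ J)) g := by
      intro U
      have hUsplit : (U ∩ I) ∪ (U ∩ J) = U := by
        rw [← Finset.inter_union_distrib_left, hJdef, Finset.union_compl,
          Finset.inter_univ]
      have hUdisj : Disjoint (U ∩ I) (U ∩ J) := by
        apply Finset.disjoint_of_subset_left Finset.inter_subset_right
        apply Finset.disjoint_of_subset_right Finset.inter_subset_right
        rw [hJdef]
        exact disjoint_compl_right
      have hadd : e (U ∩ I) + e (U ∩ J) = e U := by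
        rw [← e_union _ _ hUdisj, hUsplit]
      rw [hfg, coeff_mul]
      apply Finset.sum_eq_single_of_mem (e (U ∩ I), e (U ∩ J))
      · rw [Finset.HasAntidiagonal.mem_antidiagonal]; exact hadd
      · rintro ⟨m₁, m₂⟩ hb hbne
        rw [Finset.HasAntidiagonal.mem_antidiagonal] at hb
        by_contra hnz
        have hnz1 : coeff m₁ f ≠ 0 := fun h => hnz (by simp [h])
        have hnz2 : coeff m₂ g ≠ 0 := fun h => hnz (by simp [h])
        have hm₁ : m₁ ∈ f.support := mem_support_iff.mpr hnz1
        have hm₂ : m₂ ∈ g.support := mem_support_iff.mpr hnz2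
        have happ : ∀ i : ZMod N, m₁ i + m₂ i = e U i := by
          intro i
          have := congrArg (fun m => m i) hb
          simpa using this
        have hb1 : m₁ = e (U ∩ I) := by
          ext i
          by_cases hi : i ∈ I
          · have h2 : m₂ i = 0 := hsuppg m₂ hm₂ i hi
            have := happ i
            rw [e_apply] at this
            rw [h2, add_zero] at this
            rw [e_apply]
            simp only [Finset.mem_inter]
            by_cases hu : i ∈ U
            · rw [this, if_pos hu, if_pos ⟨hu, hi⟩]
            · rw [this, if_neg hu, if_neg (fun h => hu h.1)]
          · have h1 : m₁ i = 0 := hsuppf m₁ hm₁ i ((hmemJ i).mpr hi)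
            rw [h1, e_apply, if_neg]
            simp only [Finset.mem_inter]
            tauto
        have hb2 : m₂ = e (U ∩ J) := by
          ext i
          by_cases hi : i ∈ I
          · have h2 : m₂ i = 0 := hsuppg m₂ hm₂ i hi
            rw [h2, e_apply, if_neg]
            simp only [Finset.mem_inter]
            intro hcontra
            exact (hmemJ i).mp hcontra.2 hi
          · have h1 : m₁ i = 0 := hsuppf m₁ hm₁ i ((hmemJ i).mpr hi)
            have := happ i
            rw [h1, zero_add] at this
            rw [this, e_apply, e_apply]
            simp only [Finset.mem_inter]
            have hiJ : i ∈ J := (hmemJ i).mpr hi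
            by_cases hu : i ∈ U <;> simp [hu, hiJ]
        exact hbne (by rw [hb1, hb2])
    have keyiff : ∀ U : Finset (ZMod N),
        IsAllowed A Uᶜ ↔ (coeff (e (U ∩ I)) f ≠ 0 ∧ coeff (e (U ∩ J)) g ≠ 0) := by
      intro U
      have h1 := coeff_polyP A U
      rw [keycoeff U] at h1
      constructor
      · intro h
        rw [if_pos h] at h1
        constructor
        · intro h0; rw [h0, zero_mul] at h1; exact zero_ne_one h1
        · intro h0; rw [h0, mul_zero] at h1; exact zero_ne_one h1
      · intro ⟨ha, hb⟩
        by_contra hc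
        rw [if_neg hc] at h1
        exact (mul_ne_zero ha hb) h1
    -- top coefficients
    have htop : coeff (e I) f ≠ 0 ∧ coeff (e J) g ≠ 0 := by
      have := (keyiff Finset.univ).mp
        (by rw [Finset.compl_univ]; exact isAllowed_empty)
      rwa [Finset.univ_inter, Finset.univ_inter] at this
    -- the edge lemma
    have edge : ∀ k : ZMod N, k ∉ A → (k ∈ I ↔ k + 1 ∈ I) := by
      intro k hk
      have hall : IsAllowed A ({k, k+1} : Finset (ZMod N)) := isAllowed_pair hN hk
      have hU := (keyiff (({k, k+1} : Finset (ZMod N))ᶜ)).mp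
        (by rw [compl_compl]; exact hall)
      constructor
      · intro hkI
        by_contra hk1I
        have hcompI : (({k, k+1} : Finset (ZMod N))ᶜ) ∩ I = I \ {k} := by
          ext x
          simp only [Finset.mem_inter, Finset.mem_compl, Finset.mem_insert,
            Finset.mem_singleton, Finset.mem_sdiff]
          constructor
          · rintro ⟨hx1, hx2⟩; exact ⟨hx2, fun h => hx1 (Or.inl h)⟩
          · rintro ⟨hx1, hx2⟩
            refine ⟨?_, hx1⟩
            rintro (rfl | rfl)
            · exact hx2 rfl
            · exact hk1I hx1
        rw [hcompI] at hU
        have hcoefff : coeff (e (I \ {k})) f ≠ 0 := hU.1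
        have hU'I : ((I \ {k}) ∪ J) ∩ I = I \ {k} := by
          ext x
          simp only [Finset.mem_inter, Finset.mem_union, Finset.mem_sdiff,
            Finset.mem_singleton]
          constructor
          · rintro ⟨hx1 | hx1, hx2⟩
            · exact hx1
            · exact absurd hx2 ((hmemJ x).mp hx1)
          · rintro ⟨hx1, hx2⟩; exact ⟨Or.inl ⟨hx1, hx2⟩, hx1⟩
        have hU'J : ((I \ {k}) ∪ J) ∩ J = J := by
          ext x
          simp only [Finset.mem_inter, Finset.mem_union]
          constructor
          · rintro ⟨_, h⟩; exact h
          · intro h; exact ⟨Or.inr h, h⟩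
        have hallU' : IsAllowed A (((I \ {k}) ∪ J)ᶜ) := by
          apply (keyiff ((I \ {k}) ∪ J)).mpr
          rw [hU'I, hU'J]
          exact ⟨hcoefff, htop.2⟩
        have hcompl : ((I \ {k}) ∪ J)ᶜ = ({k} : Finset (ZMod N)) := by
          ext x
          simp only [Finset.mem_compl, Finset.mem_union, Finset.mem_sdiff,
            Finset.mem_singleton]
          constructor
          · intro hx
            push_neg at hx
            by_cases hxI : x ∈ I
            · exact (hx.1 hxI)
            · exact absurd ((hmemJ x).mpr hxI) hx.2
          · intro hxk
            push_neg
            refine ⟨fun _ => hxk, fun h => ?_⟩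
            rw [hxk] at h
            exact ((hmemJ k).mp h) hkI
        rw [hcompl] at hallU'
        exact hk (mem_of_isAllowed_singleton hallU')
      · intro hk1I
        by_contra hkI
        have hkJ : k ∈ J := (hmemJ k).mpr hkI
        have hcompJ : (({k, k+1} : Finset (ZMod N))ᶜ) ∩ J = J \ {k} := by
          ext x
          simp only [Finset.mem_inter, Finset.mem_compl, Finset.mem_insert,
            Finset.mem_singleton, Finset.mem_sdiff]
          constructor
          · rintro ⟨hx1, hx2⟩; exact ⟨hx2, fun h => hx1 (Or.inl h)⟩
          · rintro ⟨hx1, hx2⟩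
            refine ⟨?_, hx1⟩
            rintro (rfl | rfl)
            · exact hx2 rfl
            · exact ((hmemJ (k+1)).mp hx1) hk1I
        rw [hcompJ] at hU
        have hcoeffg : coeff (e (J \ {k})) g ≠ 0 := hU.2
        have hU'I : (I ∪ (J \ {k})) ∩ I = I := by
          ext x
          simp only [Finset.mem_inter, Finset.mem_union]
          constructor
          · rintro ⟨_, h⟩; exact h
          · intro h; exact ⟨Or.inl h, h⟩
        have hU'J : (I ∪ (J \ {k})) ∩ J = J \ {k} := by
          ext x
          simp only [Finset.mem_inter, Finset.mem_union, Finset.mem_sdiff,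
            Finset.mem_singleton]
          constructor
          · rintro ⟨hx1 | hx1, hx2⟩
            · exact absurd hx1 ((hmemJ x).mp hx2)
            · exact hx1
          · rintro ⟨hx1, hx2⟩; exact ⟨Or.inr ⟨hx1, hx2⟩, hx1⟩
        have hallU' : IsAllowed A ((I ∪ (J \ {k}))ᶜ) := by
          apply (keyiff (I ∪ (J \ {k}))).mpr
          rw [hU'I, hU'J]
          exact ⟨htop.1, hcoeffg⟩
        have hcompl : (I ∪ (J \ {k}))ᶜ = ({k} : Finset (ZMod N)) := by
          ext x
          simp only [Finset.mem_compl, Finset.mem_union, Finset.mem_sdiff,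
            Finset.mem_singleton]
          constructor
          · intro hx
            push_neg at hx
            by_cases hxI : x ∈ I
            · exact absurd hxI hx.1
            · exact (hx.2 ((hmemJ x).mpr hxI))
          · intro hxk
            push_neg
            refine ⟨?_, fun _ => hxk⟩
            rw [hxk]
            exact hkI
        rw [hcompl] at hallU'
        exact hk (mem_of_isAllowed_singleton hallU')
    -- I and J are nonempty
    have hIne : I.Nonempty := by
      rw [Finset.nonempty_iff_ne_empty]
      intro hIemp
      apply hfu
      apply hconst f g hfg
      intro i
      apply hJf
      rw [hmemJ, hIemp]
      exact Finset.notMem_empty i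
    have hJne : J.Nonempty := by
      rw [Finset.nonempty_iff_ne_empty]
      intro hJemp
      apply hgu
      apply hconst g f (by rw [hfg, mul_comm])
      intro i
      apply hIg
      have : i ∉ J := by rw [hJemp]; exact Finset.notMem_empty i
      rw [hmemJ] at this
      exact not_not.mp this
    -- case A = ∅
    rcases Finset.eq_empty_or_nonempty A with rfl | hA
    · have hIuniv : I = Finset.univ := by
        apply eq_univ_of_succ_closed hIne
        intro k hk
        exact (edge k (Finset.notMem_empty k)).mp hk
      obtain ⟨x, hx⟩ := hJne
      rw [hmemJ, hIuniv] at hx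
      exact hx (Finset.mem_univ x)
    -- case A nonempty
    · have hInu : I ≠ Finset.univ := by
        intro h
        obtain ⟨x, hx⟩ := hJne
        rw [hmemJ, h] at hx
        exact hx (Finset.mem_univ x)
      have hJnu : J ≠ Finset.univ := by
        intro h
        obtain ⟨x, hx⟩ := hIne
        have : x ∈ J := by rw [h]; exact Finset.mem_univ x
        exact (hmemJ x).mp this hx
      have hclJ : ∀ k : ZMod N, k ∉ A → (k ∈ J ↔ k + 1 ∈ J) := by
        intro k hk
        rw [hmemJ, hmemJ]
        exact not_iff_not.mpr (edge k hk)
      have hIall : IsAllowed A I := ⟨hInu, partitionable_closed hN hA edge⟩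
      have hJall : IsAllowed A J := ⟨hJnu, partitionable_closed hN hA hclJ⟩
      have hJI : J ∩ I = ∅ := by
        rw [hJdef]
        ext x
        simp
      have hf0' : coeff (e (∅ : Finset (ZMod N))) f ≠ 0 := by
        have := (keyiff J).mp (by rw [hJdef, compl_compl]; exact hIall)
        rw [hJI] at this
        exact this.1
      have hg0' : coeff (e (∅ : Finset (ZMod N))) g ≠ 0 := by
        have := (keyiff I).mp (by rw [hJdef] at hJall; exact hJall)
        rw [Finset.inter_self] at this
        have hIJ : I ∩ J = ∅ := by
          rw [hJdef]; ext x; simp [Finset.mem_inter]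
        rw [hIJ] at this
        exact this.2
      have : IsAllowed A ((∅ : Finset (ZMod N))ᶜ) := by
        apply (keyiff ∅).mpr
        rw [Finset.empty_inter, Finset.empty_inter]
        exact ⟨hf0', hg0'⟩
      rw [Finset.compl_empty] at this
      exact not_isAllowed_univ this
end
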